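/- arXiv:1602.01070 — 6 statements merged into one kernel-verified Lean document; each statement's English description precedes it below -/
import Mathlib

section
/- Suppose AE(U) < 1. Then there exist y₀ > 0 and γ ∈ (0,1) such that for every y with 0 < y < y₀ one has y·I(y) < (γ/(1−γ))·V(y), and moreover V(β·y) < β^{−γ/(1−γ)}·V(y) for every y with 0 < y < y₀ and every β with 0 < β < 1. -/
/-!
By concavity the supremum defining `V y` is attained at `I y`, so `V y = U (I y) - y * I y`.
Hence `-I z` is a subgradient of `V` at every `z`, and as `I` is continuous (monotone with an
interval as image), `V' = -I`. Because `AE(U) < 1`, some `γ < 1` satisfies `x U'(x) < γ U(x)`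
for all large `x`; substituting `x = I y` gives `y I(y) < γ / (1 - γ) · V(y)` for small `y`.
With `α = γ / (1 - γ)` this says exactly that `y ↦ y ^ α * V y` has positive derivative, and
comparing its values at `β y` and `y` is the second estimate.
-/

open Filter Set Topology

theorem AntitoneOn.continuousAt_of_image_mem_nhds {α β : Type*} [LinearOrder α]
    [TopologicalSpace α] [OrderTopology α] [LinearOrder β] [TopologicalSpace β] [OrderTopology β]
    [DenselyOrdered β] {f : α → β} {s : Set α} {a : α} (h : AntitoneOn f s) (hs : s ∈ 𝓝 a)
    (hfs : f '' s ∈ 𝓝 (f a)) : ContinuousAt f a :=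
  continuousAt_of_monotoneOn_of_image_mem_nhds (β := βᵒᵈ) (f := OrderDual.toDual ∘ f)
    h.dual_right hs hfs

namespace ConcaveOn
variable {S : Set ℝ} {f : ℝ → ℝ} {f' x y : ℝ}

lemma le_add_mul_sub_of_hasDerivAt (hf : ConcaveOn ℝ S f) (hx : x ∈ S) (hy : y ∈ S)
    (hd : HasDerivAt f f' x) : f y ≤ f x + f' * (y - x) := by
  rcases lt_trichotomy y x with h | rfl | h
  · have := hf.le_slope_of_hasDerivAt hy hx h hd
    rw [slope_def_field, le_div_iff₀ (sub_pos.2 h)] at this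
    linarith
  · simp
  · have := hf.slope_le_of_hasDerivAt hx hy h hd
    rw [slope_def_field, div_le_iff₀ (sub_pos.2 h)] at this
    linarith

lemma pos_of_hasDerivAt_of_strictMonoOn (hf : ConcaveOn ℝ S f) (hm : StrictMonoOn f S)
    (hx : x ∈ S) (hy : y ∈ S) (hxy : x < y) (hd : HasDerivAt f f' x) : 0 < f' :=
  ((slope_pos_iff hxy).2 (hm hx hy hxy)).trans_le (hf.slope_le_of_hasDerivAt hx hy hxy hd)

lemma mul_le_two_mul_of_hasDerivAt (hf : ConcaveOn ℝ (Ioi 0) f) (hx : 0 < x)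
    (hd : HasDerivAt f f' x) (hhalf : 0 ≤ f (x / 2)) : x * f' ≤ 2 * f x := by
  have := hf.le_add_mul_sub_of_hasDerivAt hx (half_pos hx) hd
  linarith

lemma isGreatest_sub_mul_of_hasDerivAt (hf : ConcaveOn ℝ (Ioi 0) f) (hx : 0 < x)
    (hd : HasDerivAt f y x) : IsGreatest {z | ∃ x > 0, z = f x - x * y} (f x - x * y) := by
  refine ⟨⟨x, hx, rfl⟩, ?_⟩
  rintro _ ⟨w, hw, rfl⟩
  have := hf.le_add_mul_sub_of_hasDerivAt hx hw hd
  linarith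

end ConcaveOn

lemma hasDerivAt_of_add_mul_sub_le {f g : ℝ → ℝ} {s : Set ℝ} {y : ℝ} (hs : s ∈ 𝓝 y)
    (hsub : ∀ z ∈ s, ∀ w ∈ s, f z + g z * (w - z) ≤ f w) (hg : ContinuousAt g y) :
    HasDerivAt f (g y) y := by
  rw [hasDerivAt_iff_tendsto_slope, tendsto_iff_norm_sub_tendsto_zero]
  have hy := mem_of_mem_nhds hs
  have hclose : ∀ z ∈ s, z ≠ y → ‖slope f y z - g y‖ ≤ |g z - g y| := by
    intro z hz hzy
    have h₁ := hsub y hy z hz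
    have h₂ := hsub z hz y hy
    rw [Real.norm_eq_abs, slope_def_field]
    -- the slope lies between `g y` and `g z`
    rcases hzy.lt_or_gt with h | h
    · have hd : z - y < 0 := sub_neg.2 h
      have : (f z - f y) / (z - y) ≤ g y := by rw [div_le_iff_of_neg hd]; linarith
      have : g z ≤ (f z - f y) / (z - y) := by rw [le_div_iff_of_neg hd]; linarith
      rw [abs_le]; constructor <;> linarith [neg_abs_le (g z - g y)]
    · have hd : 0 < z - y := sub_pos.2 h
      have : g y ≤ (f z - f y) / (z - y) := by rw [le_div_iff₀ hd]; linarith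
      have : (f z - f y) / (z - y) ≤ g z := by rw [div_le_iff₀ hd]; linarith
      rw [abs_le]; constructor <;> linarith [le_abs_self (g z - g y)]
  have hg₀ : Tendsto (fun z => |g z - g y|) (𝓝[≠] y) (𝓝 0) := by
    simpa using (hg.sub_const (g y)).abs.mono_left nhdsWithin_le_nhds
  refine squeeze_zero' (Eventually.of_forall fun _ => norm_nonneg _) ?_ hg₀
  filter_upwards [mem_nhdsWithin_of_mem_nhds hs, self_mem_nhdsWithin] with z hz hzy
  exact hclose z hz hzy

lemma strictMonoOn_rpow_mul_of_neg_mul_lt {f f' : ℝ → ℝ} {b α : ℝ}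
    (hf : ∀ y ∈ Ioo 0 b, HasDerivAt f (f' y) y) (h : ∀ y ∈ Ioo 0 b, -(y * f' y) < α * f y) :
    StrictMonoOn (fun y => y ^ α * f y) (Ioo 0 b) := by
  have hd : ∀ y ∈ Ioo 0 b,
      HasDerivAt (fun y => y ^ α * f y) (α * y ^ (α - 1) * f y + y ^ α * f' y) y := fun y hy =>
    (Real.hasDerivAt_rpow_const (Or.inl hy.1.ne')).mul (hf y hy)
  refine strictMonoOn_of_hasDerivWithinAt_pos (convex_Ioo 0 b)
    (f' := fun y => α * y ^ (α - 1) * f y + y ^ α * f' y)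
    (fun y hy => (hd y hy).continuousAt.continuousWithinAt) (fun y hy => ?_) (fun y hy => ?_)
  · rw [interior_Ioo] at hy ⊢
    exact (hd y hy).hasDerivWithinAt
  · rw [interior_Ioo] at hy
    have hpow : y ^ α = y ^ (α - 1) * y := by
      rw [← Real.rpow_add_one hy.1.ne', sub_add_cancel]
    have := h y hy
    rw [hpow]
    have : 0 < y ^ (α - 1) := Real.rpow_pos_of_pos hy.1 _
    nlinarith

lemma lt_rpow_neg_mul_of_neg_mul_lt {f f' : ℝ → ℝ} {b α y β : ℝ}
    (hf : ∀ y ∈ Ioo 0 b, HasDerivAt f (f' y) y) (h : ∀ y ∈ Ioo 0 b, -(y * f' y) < α * f y)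
    (hy : y ∈ Ioo 0 b) (hβ : β ∈ Ioo 0 1) : f (β * y) < β ^ (-α) * f y := by
  have hβy : β * y ∈ Ioo 0 b :=
    ⟨mul_pos hβ.1 hy.1, (mul_lt_of_lt_one_left hy.1 hβ.2).trans hy.2⟩
  have hlt := strictMonoOn_rpow_mul_of_neg_mul_lt hf h hβy hy (mul_lt_of_lt_one_left hy.1 hβ.2)
  simp only [Real.mul_rpow hβ.1.le hy.1.le] at hlt
  have hβα : 0 < β ^ α := Real.rpow_pos_of_pos hβ.1 α
  have hyα : 0 < y ^ α := Real.rpow_pos_of_pos hy.1 α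
  have : β ^ α * f (β * y) < f y := by nlinarith
  calc f (β * y) = β ^ (-α) * (β ^ α * f (β * y)) := by
        rw [← mul_assoc, ← Real.rpow_add hβ.1, neg_add_cancel, Real.rpow_zero, one_mul]
    _ < β ^ (-α) * f y := mul_lt_mul_of_pos_left this (Real.rpow_pos_of_pos hβ.1 _)

section Utility

variable {U U' V I : ℝ → ℝ}

lemma eq_sub_mul_of_isLUB (hc : ConcaveOn ℝ (Ioi 0) U)
    (hd : ∀ x ∈ Ioi (0 : ℝ), HasDerivAt U (U' x) x)
    (hV : ∀ y > 0, IsLUB {z | ∃ x > 0, z = U x - x * y} (V y)) (hI_pos : ∀ y > 0, 0 < I y)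
    (hI_left : ∀ y > 0, U' (I y) = y) {y : ℝ} (hy : 0 < y) : V y = U (I y) - y * I y := by
  have hdI : HasDerivAt U y (I y) := by simpa only [hI_left y hy] using hd _ (hI_pos y hy)
  rw [mul_comm]
  exact (hV y hy).unique (hc.isGreatest_sub_mul_of_hasDerivAt (hI_pos y hy) hdI).isLUB

lemma hasDerivAt_of_isLUB_sub_mul (hV : ∀ y > 0, IsLUB {z | ∃ x > 0, z = U x - x * y} (V y))
    (hV_eq : ∀ y > 0, V y = U (I y) - y * I y) (hI_pos : ∀ y > 0, 0 < I y)
    (hI_anti : AntitoneOn I (Ioi 0)) (hI_surj : ∀ x > 0, ∃ y > 0, I y = x) {y : ℝ} (hy : 0 < y) :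
    HasDerivAt V (-I y) y := by
  have hI : ContinuousAt I y :=
    hI_anti.continuousAt_of_image_mem_nhds (Ioi_mem_nhds hy) <|
      mem_of_superset (Ioi_mem_nhds (hI_pos y hy)) hI_surj
  refine hasDerivAt_of_add_mul_sub_le (Ioi_mem_nhds hy) (fun z hz w hw => ?_) hI.neg
  have := (hV w hw).1 ⟨I z, hI_pos z hz, rfl⟩
  rw [hV_eq z hz, Pi.neg_apply]
  linarith

lemma exists_mul_deriv_lt_of_limsup_lt (hc : ConcaveOn ℝ (Ioi 0) U) (hm : MonotoneOn U (Ioi 0))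
    (hd : ∀ x ∈ Ioi (0 : ℝ), HasDerivAt U (U' x) x) (hU_pos : ∃ x > 0, 0 < U x)
    (hAE : limsup (fun x => x * U' x / U x) atTop < 1) :
    ∃ γ : ℝ, 0 < γ ∧ γ < 1 ∧ ∃ x₀ > 0, ∀ x ≥ x₀, x * U' x < γ * U x := by
  obtain ⟨x₁, hx₁, hUx₁⟩ := hU_pos
  have hUpos : ∀ x ≥ x₁, 0 < U x := fun x hx => hUx₁.trans_le (hm hx₁ (hx₁.trans_le hx) hx)
  -- A real `limsup` carries information only for functions bounded above.
  have hbdd : IsBoundedUnder (· ≤ ·) atTop (fun x => x * U' x / U x) := by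
    refine isBoundedUnder_of_eventually_le (a := 2) (eventually_atTop.2 ⟨2 * x₁, fun x hx => ?_⟩)
    rw [div_le_iff₀ (hUpos x (by linarith))]
    exact hc.mul_le_two_mul_of_hasDerivAt (by linarith) (hd x (mem_Ioi.2 (by linarith)))
      (hUpos _ (by linarith)).le
  obtain ⟨γ, hLγ, hγ1⟩ := exists_between (max_lt hAE one_pos)
  have hev : ∀ᶠ x in atTop, x * U' x / U x < γ :=
    eventually_lt_of_limsup_lt ((le_max_left _ _).trans_lt hLγ) hbdd
  obtain ⟨x₂, hx₂⟩ := eventually_atTop.1 (hev.and (eventually_ge_atTop x₁))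
  refine ⟨γ, (le_max_right _ _).trans_lt hLγ, hγ1, max x₂ x₁, lt_max_of_lt_right hx₁,
    fun x hx => ?_⟩
  obtain ⟨hlt, hx₁x⟩ := hx₂ x (le_of_max_le_left hx)
  exact (div_lt_iff₀ (hUpos x hx₁x)).1 hlt

end Utility

theorem utility_dual_asymptotic_elasticity_estimates_general
    (U U' V I : ℝ → ℝ)
    (hU_incr : StrictMonoOn U (Set.Ioi 0))
    (hU_conc : StrictConcaveOn ℝ (Set.Ioi 0) U)
    (hU_deriv : ∀ x ∈ Set.Ioi (0:ℝ), HasDerivAt U (U' x) x)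
    (hU_pos : ∃ x > 0, 0 < U x)
    (hV : ∀ y > 0, IsLUB {z : ℝ | ∃ x > 0, z = U x - x * y} (V y))
    (hI_pos : ∀ y > 0, 0 < I y)
    (hI_left : ∀ y > 0, U' (I y) = y)
    (hI_right : ∀ x > 0, I (U' x) = x)
    (hAE : Filter.limsup (fun x => x * U' x / U x) Filter.atTop < 1) :
    ∃ y₀ > 0, ∃ γ : ℝ, 0 < γ ∧ γ < 1 ∧
      (∀ y, 0 < y → y < y₀ → y * I y < γ / (1 - γ) * V y) ∧
      (∀ y, 0 < y → y < y₀ → ∀ β : ℝ, 0 < β → β < 1 →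
        V (β * y) < β ^ (-(γ / (1 - γ))) * V y) := by
  have hc := hU_conc.concaveOn
  have hU'_pos : ∀ x > 0, 0 < U' x := fun x hx =>
    hc.pos_of_hasDerivAt_of_strictMonoOn hU_incr hx (mem_Ioi.2 (by linarith)) (lt_add_one x)
      (hU_deriv x hx)
  have hI_anti : AntitoneOn I (Ioi 0) :=
    Function.antitoneOn_of_rightInvOn_of_mapsTo
      ((hc.antitoneOn_deriv fun x hx => (hU_deriv x hx).differentiableAt).congr
        fun x hx => (hU_deriv x hx).deriv) hI_left hI_pos
  have hV_eq : ∀ y > 0, V y = U (I y) - y * I y := fun y hy =>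
    eq_sub_mul_of_isLUB hc hU_deriv hV hI_pos hI_left hy
  have hV_deriv : ∀ y > 0, HasDerivAt V (-I y) y := fun y hy =>
    hasDerivAt_of_isLUB_sub_mul hV hV_eq hI_pos hI_anti
      (fun x hx => ⟨U' x, hU'_pos x hx, hI_right x hx⟩) hy
  obtain ⟨γ, hγ0, hγ1, x₀, hx₀, hγ⟩ :=
    exists_mul_deriv_lt_of_limsup_lt hc hU_incr.monotoneOn hU_deriv hU_pos hAE
  have hfirst : ∀ y, 0 < y → y < U' x₀ → y * I y < γ / (1 - γ) * V y := by
    intro y hy hyx₀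
    have hx₀I : x₀ ≤ I y := hI_right x₀ hx₀ ▸ hI_anti hy (hU'_pos x₀ hx₀) hyx₀.le
    have := hγ (I y) hx₀I
    rw [hI_left y hy] at this
    rw [hV_eq y hy, div_mul_eq_mul_div, lt_div_iff₀ (sub_pos.2 hγ1)]
    linarith
  refine ⟨U' x₀, hU'_pos x₀ hx₀, γ, hγ0, hγ1, hfirst, fun y hy hyx₀ β hβ0 hβ1 => ?_⟩
  refine lt_rpow_neg_mul_of_neg_mul_lt (fun z hz => hV_deriv z hz.1) (fun z hz => ?_) ⟨hy, hyx₀⟩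
    ⟨hβ0, hβ1⟩
  simpa using hfirst z hz.1 hz.2

/-- Under reasonable asymptotic elasticity `AE(U) < 1`, there exist `y₀ > 0` and
`γ ∈ (0,1)` such that `y·I(y) < (γ/(1−γ))·V(y)` for all `0 < y < y₀`, and
`V(β·y) < β^{−γ/(1−γ)}·V(y)` for all `0 < y < y₀` and `0 < β < 1`. -/
theorem utility_dual_asymptotic_elasticity_estimates
    (U U' V I : ℝ → ℝ)
    (hU_incr : StrictMonoOn U (Set.Ioi 0))
    (hU_conc : StrictConcaveOn ℝ (Set.Ioi 0) U)
    (hU_deriv : ∀ x ∈ Set.Ioi (0:ℝ), HasDerivAt U (U' x) x)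
    (hU'_cont : ContinuousOn U' (Set.Ioi 0))
    (hInada_zero : Filter.Tendsto U' (nhdsWithin 0 (Set.Ioi 0)) Filter.atTop)
    (hInada_inf : Filter.Tendsto U' Filter.atTop (nhds 0))
    (hU_pos : ∃ x > 0, 0 < U x)
    (hV : ∀ y > 0, IsLUB {z : ℝ | ∃ x > 0, z = U x - x * y} (V y))
    (hI_pos : ∀ y > 0, 0 < I y)
    (hI_left : ∀ y > 0, U' (I y) = y)
    (hI_right : ∀ x > 0, I (U' x) = x)
    (hAE : Filter.limsup (fun x => x * U' x / U x) Filter.atTop < 1) :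
    ∃ y₀ > 0, ∃ γ : ℝ, 0 < γ ∧ γ < 1 ∧
      (∀ y, 0 < y → y < y₀ → y * I y < γ / (1 - γ) * V y) ∧
      (∀ y, 0 < y → y < y₀ → ∀ β : ℝ, 0 < β → β < 1 →
        V (β * y) < β ^ (-(γ / (1 - γ))) * V y) :=
  utility_dual_asymptotic_elasticity_estimates_general U U' V I hU_incr hU_conc hU_deriv hU_pos hV
    hI_pos hI_left hI_right hAE
end

section
/- Suppose AE(U) < 1 and fix y > 0. Then the family of random variables { ω ↦ max(−V(y·g(ω)), 0) : g : Ω → [0,∞) measurable with E[g] ≤ 1 } is uniformly integrable. -/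
/-!
Fenchel–Young gives `-V z ≤ a z - U a` for every `a > 0`, so `max (-V (y g)) 0 ≤ a y g + C_a`
with `C_a = max (-U a) 0`. Integrating over a set `s` and using `E[g] ≤ 1` bounds the integral of
the family over `s` by `a y + C_a P(s)`, uniformly in `g`: first choose `a` small, then `P(s)` small.
-/

open Filter Set Topology MeasureTheory
open scoped ENNReal

/-- Extending by `0` off `(0, ∞)`, where `V` carries no information, keeps this monotone on all of
`ℝ` and hence measurable. -/
noncomputable def negPartOnIoi (V : ℝ → ℝ) : ℝ → ℝ :=
  (Ioi 0).indicator fun z => max (-V z) 0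

theorem negPartOnIoi_nonneg (V : ℝ → ℝ) (z : ℝ) : 0 ≤ negPartOnIoi V z :=
  indicator_nonneg (fun _ _ => le_max_right _ _) z

section Conjugate

variable {U V : ℝ → ℝ} (hV : ∀ y > 0, IsLUB {z : ℝ | ∃ x > 0, z = U x - x * y} (V y))
include hV

theorem sub_mul_le_conj {x z : ℝ} (hx : 0 < x) (hz : 0 < z) : U x - x * z ≤ V z :=
  (hV z hz).1 ⟨x, hx, rfl⟩

theorem antitoneOn_conj : AntitoneOn V (Ioi 0) := by
  intro z₁ hz₁ z₂ hz₂ hz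
  refine (hV z₂ hz₂).2 ?_
  rintro w ⟨x, hx, rfl⟩
  calc U x - x * z₂ ≤ U x - x * z₁ := by gcongr
    _ ≤ V z₁ := sub_mul_le_conj hV hx hz₁

theorem monotone_negPartOnIoi : Monotone (negPartOnIoi V) := by
  intro z₁ z₂ hz
  by_cases hz₁ : 0 < z₁
  · have hz₂ : 0 < z₂ := hz₁.trans_le hz
    simp only [negPartOnIoi, indicator_of_mem (mem_Ioi.2 hz₁), indicator_of_mem (mem_Ioi.2 hz₂)]
    exact max_le_max (neg_le_neg (antitoneOn_conj hV hz₁ hz₂ hz)) le_rfl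
  · rw [negPartOnIoi, indicator_of_notMem (by simpa using hz₁)]
    exact negPartOnIoi_nonneg V z₂

theorem negPartOnIoi_le {a z : ℝ} (ha : 0 < a) (hz : 0 ≤ z) :
    negPartOnIoi V z ≤ a * z + max (-U a) 0 := by
  rcases hz.eq_or_lt with rfl | hz
  · simp [negPartOnIoi]
  rw [negPartOnIoi, indicator_of_mem (mem_Ioi.2 hz)]
  have := sub_mul_le_conj hV ha hz
  exact max_le (by linarith [le_max_left (-U a) 0]) (by positivity)

end Conjugate

section UniformIntegrable

variable {Ω ι : Type*} [MeasurableSpace Ω] {μ : Measure Ω}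

theorem setLIntegral_enorm_le_of_abs_le_mul_add {f g : Ω → ℝ} {a C : ℝ} (ha : 0 ≤ a)
    (hfg : ∀ ω, |f ω| ≤ a * g ω + C) (s : Set Ω) :
    ∫⁻ ω in s, ‖f ω‖ₑ ∂μ ≤
      ENNReal.ofReal a * ∫⁻ ω, ENNReal.ofReal (g ω) ∂μ + ENNReal.ofReal C * μ s := by
  have hpt : ∀ ω, ‖f ω‖ₑ ≤ ENNReal.ofReal a * ENNReal.ofReal (g ω) + ENNReal.ofReal C := by
    intro ω
    rw [Real.enorm_eq_ofReal_abs, ← ENNReal.ofReal_mul ha]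
    exact (ENNReal.ofReal_le_ofReal (hfg ω)).trans ENNReal.ofReal_add_le
  calc ∫⁻ ω in s, ‖f ω‖ₑ ∂μ
      ≤ ∫⁻ ω in s, (ENNReal.ofReal a * ENNReal.ofReal (g ω) + ENNReal.ofReal C) ∂μ :=
        lintegral_mono hpt
    _ = ENNReal.ofReal a * ∫⁻ ω in s, ENNReal.ofReal (g ω) ∂μ + ENNReal.ofReal C * μ s := by
        rw [lintegral_add_right _ measurable_const, lintegral_const_mul' _ _ ENNReal.ofReal_ne_top,
          lintegral_const, Measure.restrict_apply_univ]
    _ ≤ _ := by gcongr; exact Measure.restrict_le_self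

theorem uniformIntegrable_of_abs_le_mul_add [IsFiniteMeasure μ] {f g : ι → Ω → ℝ}
    (hf : ∀ i, AEStronglyMeasurable (f i) μ) (hg : ∀ i, ∫⁻ ω, ENNReal.ofReal (g i ω) ∂μ ≤ 1)
    (hfg : ∀ a > 0, ∃ C ≥ 0, ∀ i ω, |f i ω| ≤ a * g i ω + C) :
    UniformIntegrable f 1 μ := by
  have hbound : ∀ a > 0, ∃ C ≥ 0, ∀ i s,
      ∫⁻ ω in s, ‖f i ω‖ₑ ∂μ ≤ ENNReal.ofReal a + ENNReal.ofReal C * μ s := by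
    intro a ha
    obtain ⟨C, hC, hfgC⟩ := hfg a ha
    refine ⟨C, hC, fun i s => ?_⟩
    calc _ ≤ _ := setLIntegral_enorm_le_of_abs_le_mul_add ha.le (hfgC i) s
      _ ≤ ENNReal.ofReal a * 1 + ENNReal.ofReal C * μ s := by gcongr; exact hg i
      _ = _ := by rw [mul_one]
  refine ⟨hf, fun ε hε => ?_, ?_⟩
  · obtain ⟨C, hC, hfC⟩ := hbound (ε / 2) (by positivity)
    refine ⟨ε / (2 * (C + 1)), by positivity, fun i s hs hμs => ?_⟩
    have hCδ : C * (ε / (2 * (C + 1))) ≤ ε / 2 := by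
      rw [mul_div_assoc', div_le_div_iff₀ (by positivity) two_pos]
      nlinarith
    rw [eLpNorm_indicator_eq_eLpNorm_restrict hs, eLpNorm_one_eq_lintegral_enorm]
    calc _ ≤ ENNReal.ofReal (ε / 2) + ENNReal.ofReal C * μ s := hfC i s
      _ ≤ ENNReal.ofReal (ε / 2) + ENNReal.ofReal (ε / 2) := by
          gcongr
          calc ENNReal.ofReal C * μ s ≤ ENNReal.ofReal C * ENNReal.ofReal (ε / (2 * (C + 1))) := by
                gcongr
            _ ≤ _ := by rw [← ENNReal.ofReal_mul hC]; exact ENNReal.ofReal_le_ofReal hCδ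
      _ = ENNReal.ofReal ε := by rw [← ENNReal.ofReal_add (by positivity) (by positivity), add_halves]
  · obtain ⟨C, -, hfC⟩ := hbound 1 one_pos
    have hfin : ENNReal.ofReal 1 + ENNReal.ofReal C * μ univ ≠ ∞ := by finiteness
    refine ⟨(ENNReal.ofReal 1 + ENNReal.ofReal C * μ univ).toNNReal, fun i => ?_⟩
    rw [eLpNorm_one_eq_lintegral_enorm, ENNReal.coe_toNNReal hfin, ← setLIntegral_univ]
    exact hfC i univ

end UniformIntegrable

theorem neg_part_of_V_uniformly_integrable_general
    {Ω : Type*} [MeasurableSpace Ω] (P : Measure Ω) [IsProbabilityMeasure P]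
    (U V : ℝ → ℝ)
    (hV : ∀ y > 0, IsLUB {z : ℝ | ∃ x > 0, z = U x - x * y} (V y))
    (y : ℝ) (hy : 0 < y) :
    MeasureTheory.UniformIntegrable
      (fun (g : {g : Ω → ℝ // Measurable g ∧ (∀ ω, 0 ≤ g ω) ∧
          ∫⁻ ω, ENNReal.ofReal (g ω) ∂P ≤ 1})
        (ω : Ω) => if g.1 ω = 0 then 0 else max (-(V (y * g.1 ω))) 0)
      1 P := by
  have hfam : ∀ t ≥ 0, (if t = 0 then 0 else max (-V (y * t)) 0) = negPartOnIoi V (y * t) := by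
    intro t ht
    rcases ht.eq_or_lt with rfl | ht
    · simp [negPartOnIoi]
    · rw [if_neg ht.ne', negPartOnIoi, indicator_of_mem (mem_Ioi.2 (mul_pos hy ht))]
  refine uniformIntegrable_of_abs_le_mul_add (g := fun g => g.1) (fun g => ?_) (fun g => g.2.2.2)
    fun a ha => ⟨max (-U (a / y)) 0, le_max_right _ _, fun g ω => ?_⟩
  · simp only [hfam _ (g.2.2.1 _)]
    exact ((monotone_negPartOnIoi hV).measurable.comp (g.2.1.const_mul y)).aestronglyMeasurable
  · have hyg : 0 ≤ y * g.1 ω := mul_nonneg hy.le (g.2.2.1 ω)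
    rw [hfam _ (g.2.2.1 ω), abs_of_nonneg (negPartOnIoi_nonneg V _)]
    calc _ ≤ a / y * (y * g.1 ω) + max (-U (a / y)) 0 := negPartOnIoi_le hV (by positivity) hyg
      _ = a * g.1 ω + max (-U (a / y)) 0 := by field_simp

/-- Under `AE(U) < 1` and for fixed `y > 0`, the family
`{ ω ↦ max(−V(y·g(ω)), 0) : g : Ω → [0,∞) measurable, E[g] ≤ 1 }` is uniformly integrable.
(On `{g = 0}` the value is `max(−V(0),0) = 0` since `V(0) = U(∞) > 0`.) -/
theorem neg_part_of_V_uniformly_integrable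
    {Ω : Type*} [MeasurableSpace Ω] (P : Measure Ω) [IsProbabilityMeasure P]
    (U U' V I : ℝ → ℝ)
    (hU_incr : StrictMonoOn U (Set.Ioi 0))
    (hU_conc : StrictConcaveOn ℝ (Set.Ioi 0) U)
    (hU_deriv : ∀ x ∈ Set.Ioi (0:ℝ), HasDerivAt U (U' x) x)
    (hU'_cont : ContinuousOn U' (Set.Ioi 0))
    (hInada_zero : Filter.Tendsto U' (nhdsWithin 0 (Set.Ioi 0)) Filter.atTop)
    (hInada_inf : Filter.Tendsto U' Filter.atTop (nhds 0))
    (hU_pos : ∃ x > 0, 0 < U x)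
    (hV : ∀ y > 0, IsLUB {z : ℝ | ∃ x > 0, z = U x - x * y} (V y))
    (hI_pos : ∀ y > 0, 0 < I y)
    (hI_left : ∀ y > 0, U' (I y) = y)
    (hI_right : ∀ x > 0, I (U' x) = x)
    (hAE : Filter.limsup (fun x => x * U' x / U x) Filter.atTop < 1)
    (y : ℝ) (hy : 0 < y) :
    MeasureTheory.UniformIntegrable
      (fun (g : {g : Ω → ℝ // Measurable g ∧ (∀ ω, 0 ≤ g ω) ∧
          ∫⁻ ω, ENNReal.ofReal (g ω) ∂P ≤ 1})
        (ω : Ω) => if g.1 ω = 0 then 0 else max (-(V (y * g.1 ω))) 0)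
      1 P :=
  neg_part_of_V_uniformly_integrable_general P U V hV y hy
end

section
/- Suppose AE(U) < 1. Let y > 0 and let g : Ω → [0,∞) be integrable with E[|V(y·g)|] < ∞. Then there exists ε₀ ∈ (0, y) such that the family of random variables { ω ↦ g(ω)·I((y−ε)·g(ω)) : 0 < ε < ε₀ } is uniformly integrable, where g(ω)·I((y−ε)·g(ω)) is interpreted as 0 on the set {g = 0}. -/
/-!
Concavity makes `V t = U (I t) - t * I t` and `-I t` a subgradient of `V` at `t`, so
`t * I t ≤ 2 * (V (t / 2) - V t)`. An asymptotic elasticity `γ < 1` gives `t * I t ≤ K * V t`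
for small `t`; fed back into the subgradient inequality this is the doubling bound
`V (l * t) ≤ 2 * V t` for some `l < 1`, hence `V (z / 4) ≤ C * (|V z| + 1)` for all `z > 0`.
For `ε < y / 2` every `g * I ((y - ε) * g)` is then dominated by a multiple of `|V (y * g)| + 1`,
which is integrable.
-/

open Filter Set Topology MeasureTheory
open scoped ENNReal

theorem ConcaveOn.le_add_mul_sub_of_hasDerivAt_s4 {S : Set ℝ} {f : ℝ → ℝ} {f' a x : ℝ}
    (hf : ConcaveOn ℝ S f) (ha : a ∈ S) (hx : x ∈ S) (hfa : HasDerivAt f f' a) :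
    f x ≤ f a + f' * (x - a) := by
  rcases lt_trichotomy x a with hxa | rfl | hax
  · have h := hf.le_slope_of_hasDerivAt hx ha hxa hfa
    rw [slope_def_field, le_div_iff₀ (sub_pos.2 hxa)] at h
    linarith
  · simp
  · have h := hf.slope_le_of_hasDerivAt ha hx hax hfa
    rw [slope_def_field, div_le_iff₀ (sub_pos.2 hax)] at h
    linarith

theorem AntitoneOn.measurable_indicator {α β : Type*} [LinearOrder α] [TopologicalSpace α]
    [OrderTopology α] [MeasurableSpace α] [BorelSpace α] [SecondCountableTopology α] [Zero α]
    [LinearOrder β] [TopologicalSpace β] [OrderClosedTopology β] [MeasurableSpace β]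
    [BorelSpace β] {s : Set β} {f : β → α} (hs : MeasurableSet s) (hf : AntitoneOn f s) :
    Measurable (s.indicator f) := by
  classical
  rw [← piecewise_eq_indicator]
  refine measurable_of_restrict_of_restrict_compl hs ?_ ?_
  · rw [domRestrict_piecewise]
    exact Antitone.measurable fun a b hab => hf a.2 b.2 hab
  · rw [domRestrict_piecewise_compl]
    exact measurable_const

theorem uniformIntegrable_of_dominated {ι α β : Type*} [MeasurableSpace α] {μ : Measure α}
    [NormedAddCommGroup β] {p : ℝ≥0∞} {f : ι → α → β} {h : α → ℝ}
    (hp : 1 ≤ p) (hp' : p ≠ ∞) (hf : ∀ i, AEStronglyMeasurable (f i) μ) (hh : MemLp h p μ)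
    (hfh : ∀ i, ∀ᵐ x ∂μ, ‖f i x‖ ≤ h x) : UniformIntegrable f p μ := by
  refine ⟨hf, fun ε hε => ?_, ⟨(eLpNorm h p μ).toNNReal, fun i => ?_⟩⟩
  · obtain ⟨δ, hδ, hδh⟩ := hh.eLpNorm_indicator_le hp hp' hε
    refine ⟨δ, hδ, fun i s hs hμs => (eLpNorm_mono_ae_real ?_).trans (hδh s hs hμs)⟩
    filter_upwards [hfh i] with x hx
    rw [norm_indicator_eq_indicator_norm]
    exact indicator_le_indicator hx
  · rw [ENNReal.coe_toNNReal hh.2.ne]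
    exact eLpNorm_mono_ae_real (hfh i)

theorem AntitoneOn.comp_mul_Ioi {φ : ℝ → ℝ} (hφ : AntitoneOn φ (Ioi 0)) {c : ℝ} (hc : 0 < c) :
    AntitoneOn (fun s => φ (c * s)) (Ioi 0) := fun _ ha _ hb hab =>
  hφ (mem_Ioi.2 (mul_pos hc ha)) (mem_Ioi.2 (mul_pos hc hb))
    (mul_le_mul_of_nonneg_left hab hc.le)

theorem exists_le_mul_of_le_two_mul {V : ℝ → ℝ} (hV : AntitoneOn V (Ioi 0)) {l y₁ c : ℝ}
    (hl0 : 0 < l) (hl1 : l < 1) (hdbl : ∀ t ∈ Ioc 0 y₁, V (l * t) ≤ 2 * V t) (hc : 0 < c) :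
    ∃ C ≥ 0, ∀ t ∈ Ioc 0 y₁, V (c * t) ≤ C * V t := by
  have hiter : ∀ n : ℕ, ∀ t ∈ Ioc 0 y₁, V (l ^ n * t) ≤ 2 ^ n * V t := by
    intro n
    induction n with
    | zero => simp
    | succ n ih =>
      intro t ht
      have hlnt : l ^ n * t ∈ Ioc 0 y₁ :=
        ⟨by have := ht.1; positivity,
          (mul_le_of_le_one_left ht.1.le (pow_le_one₀ hl0.le hl1.le)).trans ht.2⟩
      calc V (l ^ (n + 1) * t) = V (l * (l ^ n * t)) := by ring_nf
        _ ≤ 2 * V (l ^ n * t) := hdbl _ hlnt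
        _ ≤ 2 ^ (n + 1) * V t := by rw [pow_succ']; linarith [ih t ht]
  obtain ⟨n, hn⟩ := exists_pow_lt_of_lt_one hc hl1
  refine ⟨2 ^ n, by positivity, fun t ht => ?_⟩
  have hlnt : 0 < l ^ n * t := by have := ht.1; positivity
  exact (hV hlnt (mul_pos hc ht.1) (by nlinarith [ht.1])).trans (hiter n t ht)

section Utility

variable {U U' V I : ℝ → ℝ}

theorem deriv_pos_of_strictMonoOn_of_concaveOn (hmono : StrictMonoOn U (Ioi 0))
    (hconc : ConcaveOn ℝ (Ioi 0) U) (hderiv : ∀ x ∈ Ioi (0 : ℝ), HasDerivAt U (U' x) x)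
    {x : ℝ} (hx : 0 < x) : 0 < U' x := by
  have hx1 : x + 1 ∈ Ioi (0 : ℝ) := mem_Ioi.2 (by linarith)
  have h := hconc.le_add_mul_sub_of_hasDerivAt_s4 hx hx1 (hderiv x hx)
  have := hmono hx hx1 (lt_add_one x)
  linarith

theorem antitoneOn_of_concaveOn_of_hasDerivAt (hconc : ConcaveOn ℝ (Ioi 0) U)
    (hderiv : ∀ x ∈ Ioi (0 : ℝ), HasDerivAt U (U' x) x) : AntitoneOn U' (Ioi 0) := by
  intro a ha b hb hab
  rw [← (hderiv a ha).deriv, ← (hderiv b hb).deriv]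
  exact hconc.antitoneOn_deriv (fun x hx => (hderiv x hx).differentiableAt) ha hb hab

theorem antitoneOn_inv_of_antitoneOn (hU' : AntitoneOn U' (Ioi 0))
    (hI_pos : ∀ t > 0, 0 < I t) (hI_left : ∀ t > 0, U' (I t) = t) : AntitoneOn I (Ioi 0) := by
  intro t ht s hs hts
  by_contra! hlt
  have := hU' (hI_pos t ht) (hI_pos s hs) hlt.le
  rw [hI_left t ht, hI_left s hs] at this
  exact hlt.ne (congrArg I (le_antisymm hts this))

theorem conj_eq_sub_mul (hconc : ConcaveOn ℝ (Ioi 0) U)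
    (hderiv : ∀ x ∈ Ioi (0 : ℝ), HasDerivAt U (U' x) x)
    (hV : ∀ t > 0, IsLUB {z : ℝ | ∃ x > 0, z = U x - x * t} (V t))
    (hI_pos : ∀ t > 0, 0 < I t) (hI_left : ∀ t > 0, U' (I t) = t) {t : ℝ} (ht : 0 < t) :
    V t = U (I t) - t * I t := by
  refine le_antisymm ((hV t ht).2 ?_) ((hV t ht).1 ⟨I t, hI_pos t ht, by ring⟩)
  rintro z ⟨x, hx, rfl⟩
  have := hconc.le_add_mul_sub_of_hasDerivAt_s4 (hI_pos t ht) hx (hderiv _ (hI_pos t ht))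
  rw [hI_left t ht] at this
  linarith

theorem conj_add_sub_mul_le (hconc : ConcaveOn ℝ (Ioi 0) U)
    (hderiv : ∀ x ∈ Ioi (0 : ℝ), HasDerivAt U (U' x) x)
    (hV : ∀ t > 0, IsLUB {z : ℝ | ∃ x > 0, z = U x - x * t} (V t))
    (hI_pos : ∀ t > 0, 0 < I t) (hI_left : ∀ t > 0, U' (I t) = t) :
    ∀ s > 0, ∀ t > 0, V t + (t - s) * I t ≤ V s := by
  intro s hs t ht
  have := (hV s hs).1 ⟨I t, hI_pos t ht, rfl⟩
  rw [conj_eq_sub_mul hconc hderiv hV hI_pos hI_left ht]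
  linarith

end Utility

section Conjugate

variable {V I : ℝ → ℝ}

theorem antitoneOn_of_add_sub_mul_le (hsub : ∀ s > 0, ∀ t > 0, V t + (t - s) * I t ≤ V s)
    (hI_pos : ∀ t > 0, 0 < I t) : AntitoneOn V (Ioi 0) := by
  intro s hs t ht hst
  have := hsub s hs t ht
  nlinarith [hI_pos t ht]

theorem mul_le_two_mul_sub_of_add_sub_mul_le
    (hsub : ∀ s > 0, ∀ t > 0, V t + (t - s) * I t ≤ V s) {t : ℝ} (ht : 0 < t) :
    t * I t ≤ 2 * (V (t / 2) - V t) := by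
  have := hsub (t / 2) (half_pos ht) t ht
  linarith

theorem le_two_mul_of_mul_le_mul (hsub : ∀ s > 0, ∀ t > 0, V t + (t - s) * I t ≤ V s)
    {K y₁ : ℝ} (hK : 0 < K) (hKV : ∀ t ∈ Ioc 0 y₁, t * I t ≤ K * V t) {t : ℝ}
    (ht : t ∈ Ioc 0 y₁) : V (2 * K / (2 * K + 1) * t) ≤ 2 * V t := by
  have hK1 : 0 < 2 * K + 1 := by linarith
  set l := 2 * K / (2 * K + 1) with hl
  have hl0 : 0 < l := by positivity
  have hl1 : l < 1 := (div_lt_one hK1).2 (by linarith)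
  have hlt : 0 < l * t := mul_pos hl0 ht.1
  have hkey := hKV (l * t) ⟨hlt, by nlinarith [ht.1, ht.2]⟩
  have hsubt := hsub t ht.1 (l * t) hlt
  have hA : t * I (l * t) ≤ (2 * K + 1) / 2 * V (l * t) := by
    rw [hl, mul_assoc, div_mul_eq_mul_div, div_le_iff₀ hK1] at hkey
    nlinarith
  have hB : (1 - l) * (t * I (l * t)) ≤ V (l * t) / 2 := by
    rw [hl, one_sub_div hK1.ne', add_sub_cancel_left, one_div_mul_eq_div, div_le_iff₀ hK1]
    linarith
  linarith

theorem exists_le_mul_abs_add_one (hsub : ∀ s > 0, ∀ t > 0, V t + (t - s) * I t ≤ V s)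
    (hI_pos : ∀ t > 0, 0 < I t) {K y₁ : ℝ} (hK : 0 < K) (hy₁ : 0 < y₁)
    (hKV : ∀ t ∈ Ioc 0 y₁, t * I t ≤ K * V t) {c : ℝ} (hc : 0 < c) :
    ∃ C ≥ 0, ∀ z > 0, V (c * z) ≤ C * (|V z| + 1) := by
  have hV := antitoneOn_of_add_sub_mul_le hsub hI_pos
  obtain ⟨C, hC0, hC⟩ := exists_le_mul_of_le_two_mul hV (by positivity)
    ((div_lt_one (by linarith)).2 (by linarith))
    (fun t ht => le_two_mul_of_mul_le_mul hsub hK hKV ht) hc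
  have hC' : 0 ≤ max C (V (c * y₁)) := hC0.trans (le_max_left _ _)
  refine ⟨max C (V (c * y₁)), hC', fun z hz => ?_⟩
  rcases le_or_gt z y₁ with hzy | hzy
  · calc V (c * z) ≤ C * V z := hC z ⟨hz, hzy⟩
      _ ≤ C * (|V z| + 1) := mul_le_mul_of_nonneg_left (by linarith [le_abs_self (V z)]) hC0
      _ ≤ max C (V (c * y₁)) * (|V z| + 1) :=
        mul_le_mul_of_nonneg_right (le_max_left _ _) (by positivity)
  · calc V (c * z) ≤ V (c * y₁) :=
          hV (mem_Ioi.2 (by positivity)) (mem_Ioi.2 (by positivity)) (by nlinarith)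
      _ ≤ max C (V (c * y₁)) * 1 := by rw [mul_one]; exact le_max_right _ _
      _ ≤ max C (V (c * y₁)) * (|V z| + 1) :=
        mul_le_mul_of_nonneg_left (by linarith [abs_nonneg (V z)]) hC'

theorem mul_le_of_le_mul_abs_add_one (hsub : ∀ s > 0, ∀ t > 0, V t + (t - s) * I t ≤ V s)
    (hI_pos : ∀ t > 0, 0 < I t) {C : ℝ} (hC : ∀ z > 0, V (1 / 4 * z) ≤ C * (|V z| + 1))
    {y a s : ℝ} (hy : 0 < y) (hya : y / 2 ≤ a) (hay : a ≤ y) (hs : 0 < s) :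
    s * I (a * s) ≤ 4 * (C + 1) / y * (|V (y * s)| + 1) := by
  have hV := antitoneOn_of_add_sub_mul_le hsub hI_pos
  have ha : 0 < a := by linarith
  have ht : 0 < a * s := mul_pos ha hs
  have hys : 0 < y * s := mul_pos hy hs
  have h1 : y * s * I (a * s) ≤ 2 * (a * s * I (a * s)) := by
    nlinarith [mul_pos hs (hI_pos _ ht)]
  have h2 := mul_le_two_mul_sub_of_add_sub_mul_le hsub ht
  have h3 : V (a * s / 2) ≤ V (1 / 4 * (y * s)) :=
    hV (mem_Ioi.2 (by positivity)) (mem_Ioi.2 (by positivity)) (by nlinarith)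
  have h4 : V (y * s) ≤ V (a * s) := hV (mem_Ioi.2 ht) (mem_Ioi.2 hys) (by nlinarith)
  rw [div_mul_eq_mul_div, le_div_iff₀ hy]
  nlinarith [hC _ hys, neg_abs_le (V (y * s))]

theorem norm_ite_mul_le_of_le_mul_abs_add_one
    (hsub : ∀ s > 0, ∀ t > 0, V t + (t - s) * I t ≤ V s) (hI_pos : ∀ t > 0, 0 < I t)
    {C : ℝ} (hC0 : 0 ≤ C) (hC : ∀ z > 0, V (1 / 4 * z) ≤ C * (|V z| + 1))
    {y ε x : ℝ} (hy : 0 < y) (hε : ε ∈ Ioo 0 (y / 2)) (hx : 0 ≤ x) :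
    ‖if x = 0 then 0 else x * I ((y - ε) * x)‖ ≤
      4 * (C + 1) / y * (|(Ioi 0).indicator (fun s => V (y * s)) x| + 1) := by
  obtain ⟨hε0, hε⟩ := hε
  rcases hx.eq_or_lt with rfl | hx
  · simp only [if_true, norm_zero]
    positivity
  · rw [if_neg hx.ne', Real.norm_eq_abs, indicator_of_mem (mem_Ioi.2 hx),
      abs_of_pos (mul_pos hx (hI_pos _ (mul_pos (by linarith) hx)))]
    exact mul_le_of_le_mul_abs_add_one hsub hI_pos hC hy (by linarith) (by linarith) hx

end Conjugate

section AsymptoticElasticity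

variable {U U' V I : ℝ → ℝ}

theorem eventually_pos_of_monotoneOn (hmono : MonotoneOn U (Ioi 0)) (hpos : ∃ x > 0, 0 < U x) :
    ∀ᶠ x in atTop, 0 < U x := by
  obtain ⟨x₁, hx₁, hUx₁⟩ := hpos
  filter_upwards [eventually_ge_atTop x₁] with x hx
  exact hUx₁.trans_le (hmono hx₁ (hx₁.trans_le hx) hx)

theorem isBoundedUnder_mul_deriv_div (hmono : MonotoneOn U (Ioi 0))
    (hconc : ConcaveOn ℝ (Ioi 0) U) (hderiv : ∀ x ∈ Ioi (0 : ℝ), HasDerivAt U (U' x) x)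
    (hpos : ∃ x > 0, 0 < U x) :
    IsBoundedUnder (· ≤ ·) atTop (fun x => x * U' x / U x) := by
  have hU := eventually_pos_of_monotoneOn hmono hpos
  refine ⟨2, eventually_map.2 ?_⟩
  filter_upwards [hU, (tendsto_id.atTop_div_const two_pos).eventually hU,
    eventually_gt_atTop 0] with x hUx hUx2 hx
  have := hconc.le_add_mul_sub_of_hasDerivAt_s4 hx (mem_Ioi.2 (half_pos hx)) (hderiv x hx)
  rw [div_le_iff₀ hUx]
  simp only [id] at hUx2
  linarith

theorem exists_eventually_mul_deriv_le_of_limsup_lt_one (hmono : MonotoneOn U (Ioi 0))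
    (hconc : ConcaveOn ℝ (Ioi 0) U) (hderiv : ∀ x ∈ Ioi (0 : ℝ), HasDerivAt U (U' x) x)
    (hpos : ∃ x > 0, 0 < U x) (hAE : limsup (fun x => x * U' x / U x) atTop < 1) :
    ∃ γ, 0 < γ ∧ γ < 1 ∧ ∀ᶠ x in atTop, x * U' x ≤ γ * U x := by
  obtain ⟨γ, hγ, hγ1⟩ := exists_between (max_lt hAE zero_lt_one)
  refine ⟨γ, (le_max_right _ _).trans_lt hγ, hγ1, ?_⟩
  filter_upwards [eventually_lt_of_limsup_lt ((le_max_left _ _).trans_lt hγ)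
    (isBoundedUnder_mul_deriv_div hmono hconc hderiv hpos),
    eventually_pos_of_monotoneOn hmono hpos] with x hx hUx
  exact ((div_lt_iff₀ hUx).1 hx).le

theorem exists_mul_le_mul_conj {γ : ℝ} (hγ0 : 0 < γ) (hγ1 : γ < 1)
    (hγ : ∀ᶠ x in atTop, x * U' x ≤ γ * U x) (hU'_pos : ∀ x > 0, 0 < U' x)
    (hI : AntitoneOn I (Ioi 0))
    (hI_left : ∀ t > 0, U' (I t) = t) (hI_right : ∀ x > 0, I (U' x) = x)
    (hVeq : ∀ t > 0, V t = U (I t) - t * I t) :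
    ∃ K > 0, ∃ y₁ > 0, ∀ t ∈ Ioc 0 y₁, t * I t ≤ K * V t := by
  obtain ⟨x₀, hx₀⟩ := eventually_atTop.1 (hγ.and (eventually_gt_atTop 0))
  have hx₀pos := (hx₀ x₀ le_rfl).2
  refine ⟨γ / (1 - γ), div_pos hγ0 (sub_pos.2 hγ1), U' x₀, hU'_pos x₀ hx₀pos,
    fun t ⟨ht, hty⟩ => ?_⟩
  have hIt : x₀ ≤ I t := hI_right x₀ hx₀pos ▸ hI ht (hU'_pos x₀ hx₀pos) hty
  have h := (hx₀ (I t) hIt).1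
  rw [hI_left t ht, ← sub_add_cancel (U (I t)) (t * I t), ← hVeq t ht] at h
  rw [div_mul_eq_mul_div, le_div_iff₀ (sub_pos.2 hγ1)]
  linarith

end AsymptoticElasticity

section Measurability

variable {Ω : Type*} [MeasurableSpace Ω] {g : Ω → ℝ} {φ : ℝ → ℝ}

theorem measurable_ite_mul_of_antitoneOn (hg : Measurable g) (hg0 : ∀ ω, 0 ≤ g ω)
    (hφ : AntitoneOn φ (Ioi 0)) :
    Measurable fun ω => if g ω = 0 then 0 else g ω * φ (g ω) := by
  have h := hφ.measurable_indicator measurableSet_Ioi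
  convert hg.mul (h.comp hg) using 1
  ext ω
  rcases (hg0 ω).eq_or_lt with h0 | h0
  · simp [← h0]
  · simp [h0.ne', indicator_of_mem (mem_Ioi.2 h0)]

theorem integrable_abs_indicator_of_lintegral_ne_top {μ : Measure Ω} (hg : Measurable g)
    (hφ : AntitoneOn φ (Ioi 0)) {v₀ : EReal}
    (h : ∫⁻ ω, (if g ω = 0 then v₀ else (φ (g ω) : EReal)).abs ∂μ ≠ ⊤) :
    Integrable (fun ω => |(Ioi 0).indicator φ (g ω)|) μ := by
  refine ⟨((hφ.measurable_indicator measurableSet_Ioi).comp hg).abs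
    |>.aestronglyMeasurable, (lintegral_mono fun ω => ?_).trans_lt h.lt_top⟩
  by_cases hg0 : g ω = 0
  · simp [hg0]
  · rw [if_neg hg0, EReal.abs_def, Real.enorm_eq_ofReal_abs, abs_abs]
    by_cases hpos : g ω ∈ Ioi 0 <;> simp [hpos]

end Measurability

theorem gI_family_uniformly_integrable_general
    {Ω : Type*} [MeasurableSpace Ω] (P : Measure Ω) [IsProbabilityMeasure P]
    (U U' V I : ℝ → ℝ)
    (hU_incr : StrictMonoOn U (Set.Ioi 0))
    (hU_conc : StrictConcaveOn ℝ (Set.Ioi 0) U)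
    (hU_deriv : ∀ x ∈ Set.Ioi (0:ℝ), HasDerivAt U (U' x) x)
    (hU_pos : ∃ x > 0, 0 < U x)
    (hV : ∀ y > 0, IsLUB {z : ℝ | ∃ x > 0, z = U x - x * y} (V y))
    (hI_pos : ∀ y > 0, 0 < I y)
    (hI_left : ∀ y > 0, U' (I y) = y)
    (hI_right : ∀ x > 0, I (U' x) = x)
    (hAE : Filter.limsup (fun x => x * U' x / U x) Filter.atTop < 1)
    (V0 : EReal)
    (y : ℝ) (hy : 0 < y)
    (g : Ω → ℝ) (hg_meas : Measurable g) (hg_nonneg : ∀ ω, 0 ≤ g ω)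
    (hVg : ∫⁻ ω, (if g ω = 0 then V0 else (V (y * g ω) : EReal)).abs ∂P ≠ ⊤) :
    ∃ ε₀ : ℝ, 0 < ε₀ ∧ ε₀ < y ∧
      MeasureTheory.UniformIntegrable
        (fun (ε : {e : ℝ // 0 < e ∧ e < ε₀}) (ω : Ω) =>
          if g ω = 0 then 0 else g ω * I ((y - ε.1) * g ω))
        1 P := by
  have hconc := hU_conc.concaveOn
  have hsub := conj_add_sub_mul_le hconc hU_deriv hV hI_pos hI_left
  have hVanti := antitoneOn_of_add_sub_mul_le hsub hI_pos
  have hIanti := antitoneOn_inv_of_antitoneOn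
    (antitoneOn_of_concaveOn_of_hasDerivAt hconc hU_deriv) hI_pos hI_left
  obtain ⟨γ, hγ0, hγ1, hγ⟩ := exists_eventually_mul_deriv_le_of_limsup_lt_one
    hU_incr.monotoneOn hconc hU_deriv hU_pos hAE
  obtain ⟨K, hK, y₁, hy₁, hKV⟩ := exists_mul_le_mul_conj hγ0 hγ1 hγ
    (fun x hx => deriv_pos_of_strictMonoOn_of_concaveOn hU_incr hconc hU_deriv hx) hIanti
    hI_left hI_right (fun t ht => conj_eq_sub_mul hconc hU_deriv hV hI_pos hI_left ht)
  obtain ⟨C, hC0, hC⟩ :=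
    exists_le_mul_abs_add_one hsub hI_pos hK hy₁ hKV (c := 1 / 4) (by norm_num)
  have hdom :=
    integrable_abs_indicator_of_lintegral_ne_top hg_meas (hVanti.comp_mul_Ioi hy) hVg
  refine ⟨y / 2, half_pos hy, half_lt_self hy, uniformIntegrable_of_dominated le_rfl
    ENNReal.one_ne_top (fun ε => ?_) (memLp_one_iff_integrable.2
      ((hdom.add (integrable_const 1)).const_mul (4 * (C + 1) / y)))
    (fun ε => ae_of_all _ fun ω =>
      norm_ite_mul_le_of_le_mul_abs_add_one hsub hI_pos hC0 hC hy ε.2 (hg_nonneg ω))⟩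
  exact (measurable_ite_mul_of_antitoneOn hg_meas hg_nonneg
    (hIanti.comp_mul_Ioi (by linarith [ε.2.2]))).aestronglyMeasurable

/-- Under `AE(U) < 1`, for `y > 0` and `g : Ω → [0,∞)` integrable with
`E[|V(y·g)|] < ∞` (where `V(0) := U(∞) =: V0`, possibly `+∞`, on `{g = 0}`), there is
`ε₀ ∈ (0, y)` such that `{ ω ↦ g(ω)·I((y−ε)·g(ω)) : 0 < ε < ε₀ }` is uniformly integrable,
the integrand being interpreted as `0` on `{g = 0}`. -/
theorem gI_family_uniformly_integrable
    {Ω : Type*} [MeasurableSpace Ω] (P : Measure Ω) [IsProbabilityMeasure P]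
    (U U' V I : ℝ → ℝ)
    (hU_incr : StrictMonoOn U (Set.Ioi 0))
    (hU_conc : StrictConcaveOn ℝ (Set.Ioi 0) U)
    (hU_deriv : ∀ x ∈ Set.Ioi (0:ℝ), HasDerivAt U (U' x) x)
    (hU'_cont : ContinuousOn U' (Set.Ioi 0))
    (hInada_zero : Filter.Tendsto U' (nhdsWithin 0 (Set.Ioi 0)) Filter.atTop)
    (hInada_inf : Filter.Tendsto U' Filter.atTop (nhds 0))
    (hU_pos : ∃ x > 0, 0 < U x)
    (hV : ∀ y > 0, IsLUB {z : ℝ | ∃ x > 0, z = U x - x * y} (V y))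
    (hI_pos : ∀ y > 0, 0 < I y)
    (hI_left : ∀ y > 0, U' (I y) = y)
    (hI_right : ∀ x > 0, I (U' x) = x)
    (hAE : Filter.limsup (fun x => x * U' x / U x) Filter.atTop < 1)
    (V0 : EReal) (hV0 : Filter.Tendsto (fun x => (U x : EReal)) Filter.atTop (nhds V0))
    (y : ℝ) (hy : 0 < y)
    (g : Ω → ℝ) (hg_meas : Measurable g) (hg_nonneg : ∀ ω, 0 ≤ g ω)
    (hg_int : Integrable g P)
    (hVg : ∫⁻ ω, (if g ω = 0 then V0 else (V (y * g ω) : EReal)).abs ∂P ≠ ⊤) :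
    ∃ ε₀ : ℝ, 0 < ε₀ ∧ ε₀ < y ∧
      MeasureTheory.UniformIntegrable
        (fun (ε : {e : ℝ // 0 < e ∧ e < ε₀}) (ω : Ω) =>
          if g ω = 0 then 0 else g ω * I ((y - ε.1) * g ω))
        1 P :=
  gI_family_uniformly_integrable_general P U U' V I hU_incr hU_conc hU_deriv hU_pos hV hI_pos
    hI_left hI_right hAE V0 y hy g hg_meas hg_nonneg hVg
end

section
/- Let (g_n)_{n∈ℕ} be a sequence of nonnegative integrable random variables on (Ω, F, P) with sup_n E[g_n] < ∞. Then there exist random variables h_n, each a finite convex combination of g_n, g_{n+1}, g_{n+2}, …, and a nonnegative, almost surely finite random variable g such that h_n → g almost surely. -/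
/-!
Put `V f = E[exp (-2 f)]`. Since `exp (-(f + f') / 2) ^ 2 = exp (-f) * exp (-f')`, the midpoint
defect `V f + V f' - 2 V ((f + f') / 2)` equals `E[(exp (-f) - exp (-f'))²]`. As `V` is bounded,
its infima over the hulls `conv (g_n, g_{n+1}, …)` increase to a limit; taking `h_j` nearly optimal
in suitably late hulls makes the defect of `(h_j, h_k)`, `j ≤ k`, smaller than `4⁻ʲ`, so
`exp (-h_n)` is Cauchy in `L²` fast enough to converge almost surely. Fatou and `E[h_n] ≤ C` give
`liminf h_n < ∞` a.s., which rules out the limit `0`, so `h_n` itself converges a.s.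
-/

open Filter Set Topology MeasureTheory
open scoped ENNReal

theorem exists_seq_midpoint_defect_lt {E : Type*} [AddCommGroup E] [Module ℝ E]
    {S : ℕ → Set E} (hS : Antitone S) (hconv : ∀ n, Convex ℝ (S n))
    (hne : ∀ n, (S n).Nonempty) {V : E → ℝ} (hV_below : BddBelow (V '' S 0))
    (hV_above : BddAbove (V '' S 0)) {ε : ℕ → ℝ} (hε : ∀ n, 0 < ε n) (hε_anti : Antitone ε) :
    ∃ x : ℕ → E, (∀ n, x n ∈ S n) ∧
      ∀ j k, j ≤ k → V (x j) + V (x k) - 2 * V (midpoint ℝ (x j) (x k)) < ε j := by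
  set δ : ℕ → ℝ := fun n => sInf (V '' S n)
  have hbelow n : BddBelow (V '' S n) := hV_below.mono (image_mono (hS (Nat.zero_le n)))
  have hδ_le {n x} (hx : x ∈ S n) : δ n ≤ V x := csInf_le (hbelow n) (mem_image_of_mem V hx)
  have hδ_mono : Monotone δ := fun m n hmn =>
    csInf_le_csInf (hbelow m) ((hne n).image V) (image_mono (hS hmn))
  have hδ_bdd : BddAbove (range δ) := by
    obtain ⟨b, hb⟩ := hV_above
    refine ⟨b, ?_⟩
    rintro _ ⟨n, rfl⟩
    obtain ⟨x, hx⟩ := hne n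
    exact (hδ_le hx).trans (hb (mem_image_of_mem V (hS (Nat.zero_le n) hx)))
  set σ := ⨆ n, δ n
  obtain ⟨N, hN_mono, hN⟩ : ∃ N : ℕ → ℕ, StrictMono N ∧ ∀ j, σ - ε j / 3 < δ (N j) :=
    extraction_forall_of_eventually fun j =>
      (tendsto_order.1 (tendsto_atTop_ciSup hδ_mono hδ_bdd)).1 _ (by linarith [hε j])
  have hx j : ∃ x ∈ S (N j), V x < δ (N j) + ε j / 3 := by
    obtain ⟨_, ⟨x, hx, rfl⟩, hlt⟩ :=
      exists_lt_of_csInf_lt ((hne (N j)).image V)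
        (lt_add_of_pos_right (δ (N j)) (by linarith [hε j] : 0 < ε j / 3))
    exact ⟨x, hx, hlt⟩
  choose x hxS hxV using hx
  refine ⟨x, fun n => hS (hN_mono.id_le n) (hxS n), fun j k hjk => ?_⟩
  -- `V` at the midpoint is `≥ δ (N j) > σ - ε j / 3`, at both endpoints `< σ + ε j / 3`.
  have hmid := hδ_le ((hconv (N j)).midpoint_mem (hxS j) (hS (hN_mono.monotone hjk) (hxS k)))
  have hδσ : δ (N k) ≤ σ := le_ciSup hδ_bdd _
  linarith [hxV j, hxV k, hN j, hε_anti hjk]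

theorem exists_sum_eq_of_mem_convexHull_image {ι E : Type*} [AddCommGroup E] [Module ℝ E]
    {v : ι → E} {t : Set ι} {x : E} (hx : x ∈ convexHull ℝ (v '' t)) :
    ∃ (s : Finset ι) (w : ι → ℝ), (∀ i ∈ s, i ∈ t) ∧ (∀ i ∈ s, 0 ≤ w i) ∧ ∑ i ∈ s, w i = 1 ∧
      x = ∑ i ∈ s, w i • v i := by
  classical
  rw [image_eq_range, convexHull_range_eq_exists_affineCombination] at hx
  obtain ⟨s, w, hw0, hw1, rfl⟩ := hx
  refine ⟨s.map (Function.Embedding.subtype _), fun i => if h : i ∈ t then w ⟨i, h⟩ else 0,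
    ?_, ?_, ?_, ?_⟩
  · simp +contextual
  · simp +contextual [hw0]
  · simpa using hw1
  · rw [s.affineCombination_eq_linear_combination _ _ hw1]
    simp

section

variable {Ω : Type*} [MeasurableSpace Ω] {P : Measure Ω}

theorem convex_setOf_integrable_integral_le (C : ℝ) :
    Convex ℝ {f : Ω → ℝ | Integrable f P ∧ ∫ ω, f ω ∂P ≤ C} := by
  rintro f ⟨hf, hfC⟩ f' ⟨hf', hf'C⟩ a b ha hb hab
  refine ⟨(hf.smul a).add (hf'.smul b), ?_⟩
  simp only [Pi.add_apply, Pi.smul_apply, smul_eq_mul]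
  rw [integral_add (hf.const_mul a) (hf'.const_mul b), integral_const_mul, integral_const_mul]
  calc a * ∫ ω, f ω ∂P + b * ∫ ω, f' ω ∂P ≤ a * C + b * C :=
        add_le_add (mul_le_mul_of_nonneg_left hfC ha) (mul_le_mul_of_nonneg_left hf'C hb)
    _ = C := by rw [← add_mul, hab, one_mul]

theorem convex_setOf_aestronglyMeasurable :
    Convex ℝ {f : Ω → ℝ | AEStronglyMeasurable f P} :=
  fun _ hf _ hf' a b _ _ _ => (hf.const_smul a).add (hf'.const_smul b)

theorem integral_sub_sq {a b : Ω → ℝ} (ha : MemLp a 2 P) (hb : MemLp b 2 P) :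
    ∫ ω, (a ω - b ω) ^ 2 ∂P = ∫ ω, a ω ^ 2 ∂P + ∫ ω, b ω ^ 2 ∂P - 2 * ∫ ω, a ω * b ω ∂P := by
  have hab : Integrable (fun ω => a ω * b ω) P := ha.integrable_mul hb
  have hsq : Integrable (fun ω => a ω ^ 2 + b ω ^ 2) P := ha.integrable_sq.add hb.integrable_sq
  simp_rw [sub_sq', mul_assoc]
  rw [integral_sub hsq (hab.const_mul 2),
    integral_add ha.integrable_sq hb.integrable_sq, integral_const_mul]

theorem memLp_exp_neg [IsFiniteMeasure P] {f : Ω → ℝ} (hf : AEStronglyMeasurable f P)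
    (hf0 : 0 ≤ f) (p : ℝ≥0∞) : MemLp (fun ω => Real.exp (-f ω)) p P :=
  MemLp.of_bound (Real.continuous_exp.comp_aestronglyMeasurable hf.neg) 1 <|
    ae_of_all _ fun ω => by
      simpa [abs_of_pos (Real.exp_pos _)] using hf0 ω

theorem integral_exp_neg_sq_le_one [IsProbabilityMeasure P] {f : Ω → ℝ} (hf0 : 0 ≤ f) :
    ∫ ω, Real.exp (-f ω) ^ 2 ∂P ≤ 1 :=
  calc ∫ ω, Real.exp (-f ω) ^ 2 ∂P ≤ ∫ _, (1 : ℝ) ∂P :=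
        integral_mono_of_nonneg (ae_of_all _ fun ω => sq_nonneg _) (integrable_const 1)
          (ae_of_all _ fun ω =>
            pow_le_one₀ (Real.exp_pos _).le (Real.exp_le_one_iff.2 (neg_nonpos.2 (hf0 ω))))
    _ = 1 := by simp

theorem integral_exp_neg_midpoint_defect [IsFiniteMeasure P] {f f' : Ω → ℝ}
    (hf : AEStronglyMeasurable f P) (hf' : AEStronglyMeasurable f' P) (hf0 : 0 ≤ f)
    (hf'0 : 0 ≤ f') :
    ∫ ω, Real.exp (-f ω) ^ 2 ∂P + ∫ ω, Real.exp (-f' ω) ^ 2 ∂P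
        - 2 * ∫ ω, Real.exp (-midpoint ℝ f f' ω) ^ 2 ∂P
      = ∫ ω, (Real.exp (-f ω) - Real.exp (-f' ω)) ^ 2 ∂P := by
  have hmid ω : Real.exp (-midpoint ℝ f f' ω) ^ 2 = Real.exp (-f ω) * Real.exp (-f' ω) := by
    rw [← Real.exp_nat_mul, ← Real.exp_add, pi_midpoint_apply, midpoint_eq_smul_add,
      invOf_eq_inv, smul_eq_mul]
    ring_nf
  simp_rw [hmid, integral_sub_sq (memLp_exp_neg hf hf0 2) (memLp_exp_neg hf' hf'0 2)]


theorem eLpNorm_two_eq_sqrt_integral_sq {f : Ω → ℝ} (hf : MemLp f 2 P) :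
    eLpNorm f 2 P = ENNReal.ofReal √(∫ ω, f ω ^ 2 ∂P) := by
  rw [hf.eLpNorm_eq_integral_rpow_norm two_ne_zero ENNReal.ofNat_ne_top, Real.sqrt_eq_rpow]
  simp only [Real.norm_eq_abs, ENNReal.toReal_ofNat, Real.rpow_ofNat, sq_abs, one_div]

theorem ae_tendsto_of_integral_sq_sub_lt {f : ℕ → Ω → ℝ} (hf : ∀ n, MemLp (f n) 2 P)
    (h : ∀ j k, j ≤ k → ∫ ω, (f j ω - f k ω) ^ 2 ∂P < (1 / 4) ^ j) :
    ∀ᵐ ω ∂P, ∃ l, Tendsto (fun n => f n ω) atTop (𝓝 l) := by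
  refine Lp.ae_tendsto_of_cauchy_eLpNorm (p := 2) (fun n => (hf n).1) one_le_two
    (B := fun N => ENNReal.ofReal ((1 / 2) ^ N)) ?_ fun N n m hn hm => ?_
  · rw [← ENNReal.ofReal_tsum_of_nonneg (fun N => by positivity) summable_geometric_two]
    exact ENNReal.ofReal_ne_top
  · wlog hnm : n ≤ m generalizing n m
    · rw [eLpNorm_sub_comm]
      exact this m n hm hn (le_of_not_ge hnm)
    rw [eLpNorm_two_eq_sqrt_integral_sq ((hf n).sub (hf m)),
      ENNReal.ofReal_lt_ofReal_iff (by positivity), Real.sqrt_lt' (by positivity)]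
    calc ∫ ω, (f n - f m) ω ^ 2 ∂P < (1 / 4) ^ n := h n m hnm
      _ ≤ (1 / 4) ^ N := pow_le_pow_of_le_one (by norm_num) (by norm_num) hn
      _ = ((1 / 2) ^ N) ^ 2 := by rw [← pow_mul, mul_comm, pow_mul]; norm_num

theorem aemeasurable_liminf_atTop {α : Type*} [TopologicalSpace α] [MeasurableSpace α]
    [BorelSpace α] [ConditionallyCompleteLinearOrder α] [OrderTopology α]
    [SecondCountableTopology α] {f : ℕ → Ω → α} (hf : ∀ n, AEMeasurable (f n) P) :
    AEMeasurable (fun ω => liminf (fun n => f n ω) atTop) P :=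
  (Measurable.liminf fun n => (hf n).measurable_mk).aemeasurable.congr <| by
    filter_upwards [ae_all_iff.2 fun n => (hf n).ae_eq_mk] with ω hω
    simp only [hω]

theorem ae_liminf_ofReal_lt_top {f : ℕ → Ω → ℝ} (hf : ∀ n, Integrable (f n) P)
    (hf0 : ∀ n, 0 ≤ f n) {C : ℝ} (hC : ∀ n, ∫ ω, f n ω ∂P ≤ C) :
    ∀ᵐ ω ∂P, liminf (fun n => ENNReal.ofReal (f n ω)) atTop < ∞ := by
  have hmeas n : AEMeasurable (fun ω => ENNReal.ofReal (f n ω)) P :=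
    (hf n).1.aemeasurable.ennreal_ofReal
  refine ae_lt_top' (aemeasurable_liminf_atTop hmeas)
    (ne_top_of_le_ne_top (ENNReal.ofReal_ne_top (r := C)) ?_)
  calc ∫⁻ ω, liminf (fun n => ENNReal.ofReal (f n ω)) atTop ∂P
      ≤ liminf (fun n => ∫⁻ ω, ENNReal.ofReal (f n ω) ∂P) atTop := lintegral_liminf_le' hmeas
    _ ≤ ENNReal.ofReal C := by
        refine liminf_le_of_frequently_le' (.of_forall fun n => ?_)
        rw [← ofReal_integral_eq_lintegral_ofReal (hf n) (ae_of_all _ (hf0 n))]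
        exact ENNReal.ofReal_le_ofReal (hC n)

theorem exists_seq_mem_convexHull_ae_tendsto_exp_neg [IsProbabilityMeasure P] {g : ℕ → Ω → ℝ}
    (hg : ∀ n, AEStronglyMeasurable (g n) P) (hg0 : ∀ n, 0 ≤ g n) :
    ∃ h : ℕ → Ω → ℝ, (∀ n, h n ∈ convexHull ℝ (g '' Ici n)) ∧
      ∀ᵐ ω ∂P, ∃ l, Tendsto (fun n => Real.exp (-h n ω)) atTop (𝓝 l) := by
  set S : ℕ → Set (Ω → ℝ) := fun n => convexHull ℝ (g '' Ici n)
  have hS_anti : Antitone S := fun m n hmn => convexHull_mono (image_mono (Ici_subset_Ici.2 hmn))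
  have hS_sub : S 0 ⊆ {f | AEStronglyMeasurable f P} ∩ Ici 0 :=
    convexHull_min (by rintro _ ⟨n, -, rfl⟩; exact ⟨hg n, hg0 n⟩)
      (convex_setOf_aestronglyMeasurable.inter (convex_Ici 0))
  obtain ⟨h, hhS, hdefect⟩ := exists_seq_midpoint_defect_lt hS_anti
    (fun n => convex_convexHull ℝ _) (fun n => ⟨g n, subset_convexHull ℝ _ ⟨n, self_mem_Ici, rfl⟩⟩)
    (V := fun f => ∫ ω, Real.exp (-f ω) ^ 2 ∂P)
    ⟨0, by rintro _ ⟨f, -, rfl⟩; exact integral_nonneg fun ω => sq_nonneg _⟩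
    ⟨1, by rintro _ ⟨f, hf, rfl⟩; exact integral_exp_neg_sq_le_one (hS_sub hf).2⟩
    (ε := fun j => (1 / 4 : ℝ) ^ j) (fun j => by positivity)
    (fun j k hjk => pow_le_pow_of_le_one (by norm_num) (by norm_num) hjk)
  have hh n : AEStronglyMeasurable (h n) P ∧ 0 ≤ h n := hS_sub (hS_anti (Nat.zero_le n) (hhS n))
  refine ⟨h, hhS, ae_tendsto_of_integral_sq_sub_lt (fun n => memLp_exp_neg (hh n).1 (hh n).2 2)
    fun j k hjk => ?_⟩
  rw [← integral_exp_neg_midpoint_defect (hh j).1 (hh k).1 (hh j).2 (hh k).2]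
  exact hdefect j k hjk

end

theorem tendsto_toReal_liminf_ofReal {x : ℕ → ℝ} (hx0 : ∀ n, 0 ≤ x n) {l : ℝ}
    (hl : Tendsto (fun n => Real.exp (-x n)) atTop (𝓝 l))
    (hx : liminf (fun n => ENNReal.ofReal (x n)) atTop < ∞) :
    Tendsto x atTop (𝓝 (liminf (fun n => ENNReal.ofReal (x n)) atTop).toReal) := by
  have hl0 : l ≠ 0 := by
    rintro rfl
    have hexp : Tendsto (fun n => Real.exp (-x n)) atTop (𝓝[>] 0) :=
      tendsto_nhdsWithin_of_tendsto_nhds_of_eventually_within _ hl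
        (.of_forall fun n => Real.exp_pos _)
    have hx_top : Tendsto x atTop atTop := by
      rw [← tendsto_neg_atBot_iff]
      simpa [Function.comp_def] using Real.tendsto_log_nhdsGT_zero.comp hexp
    have hofReal : Tendsto (fun n => ENNReal.ofReal (x n)) atTop (𝓝 ∞) :=
      ENNReal.tendsto_ofReal_atTop.comp hx_top
    exact hx.ne hofReal.liminf_eq
  have hlim : Tendsto x atTop (𝓝 (-Real.log l)) := by
    have := ((Real.continuousAt_log hl0).tendsto.comp hl).neg
    simpa [Function.comp_def] using this
  rwa [(ENNReal.tendsto_ofReal hlim).liminf_eq,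
    ENNReal.toReal_ofReal (ge_of_tendsto' hlim hx0)]

/-- Komlós-type lemma: Given nonnegative integrable random variables `g_n` with
`sup_n E[g_n] < ∞`, there are forward convex combinations `h_n ∈ conv(g_n, g_{n+1}, …)` and a
nonnegative (almost surely finite, i.e. real-valued) random variable `g` with `h_n → g` a.s. -/
theorem forward_convex_combinations_converge
    {Ω : Type*} [MeasurableSpace Ω] (P : Measure Ω) [IsProbabilityMeasure P]
    (g : ℕ → Ω → ℝ)
    (hg_int : ∀ n, Integrable (g n) P)
    (hg_nonneg : ∀ n ω, 0 ≤ g n ω)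
    (C : ℝ) (hC : ∀ n, ∫ ω, g n ω ∂P ≤ C) :
    ∃ (h : ℕ → Ω → ℝ) (glim : Ω → ℝ),
      (∀ n, ∃ (s : Finset ℕ) (a : ℕ → ℝ),
        (∀ k ∈ s, n ≤ k) ∧ (∀ k ∈ s, 0 ≤ a k) ∧ (∑ k ∈ s, a k) = 1 ∧
        h n = fun ω => ∑ k ∈ s, a k * g k ω) ∧
      (∀ ω, 0 ≤ glim ω) ∧
      (∀ᵐ ω ∂P, Filter.Tendsto (fun n => h n ω) Filter.atTop (nhds (glim ω))) := by
  obtain ⟨h, hhS, hexp⟩ :=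
    exists_seq_mem_convexHull_ae_tendsto_exp_neg (fun n => (hg_int n).1) fun n => hg_nonneg n
  have hh n : (Integrable (h n) P ∧ ∫ ω, h n ω ∂P ≤ C) ∧ 0 ≤ h n :=
    convexHull_min (by rintro _ ⟨k, -, rfl⟩; exact ⟨⟨hg_int k, hC k⟩, hg_nonneg k⟩)
      ((convex_setOf_integrable_integral_le C).inter (convex_Ici 0)) (hhS n)
  refine ⟨h, fun ω => (liminf (fun n => ENNReal.ofReal (h n ω)) atTop).toReal, fun n => ?_,
    fun ω => ENNReal.toReal_nonneg, ?_⟩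
  · obtain ⟨s, a, hs, ha0, ha1, hsum⟩ := exists_sum_eq_of_mem_convexHull_image (hhS n)
    exact ⟨s, a, hs, ha0, ha1, by rw [hsum]; ext ω; simp [Finset.sum_apply]⟩
  · filter_upwards [hexp, ae_liminf_ofReal_lt_top (fun n => (hh n).1.1) (fun n => (hh n).2)
      fun n => (hh n).1.2] with ω ⟨l, hl⟩ hω
    exact tendsto_toReal_liminf_ofReal (fun n => (hh n).2 ω) hl hω
end

section
/- Fix y > 0 and let D be a nonempty convex subset of L¹₊(P) × ℝ. Define J(f, c) := E[V(y·f)] + y·c for (f,c) ∈ D, where V(y·f(ω)) is interpreted as V(0) = U(∞) on {f = 0} and E[V(y·f)] is well-defined in (−∞, ∞] because V admits the affine minorant V(z) ≥ U(1) − z. If (f₁, c₁) and (f₂, c₂) both attain the infimum of J over D and this infimum is finite, then f₁ = f₂ P-almost surely. -/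
/-!
Write `W` for `V` extended by `W(0) = U(∞)`. For `m > 0` the line `z ↦ U(I m) - I m · z`
touches `W` at `m` and lies strictly below it at every other `z ≥ 0` (strict concavity of `U`
for `z > 0`, and `U < U(∞)` at `z = 0`), so `W` is strictly midpoint convex on `[0, ∞)`; it is
also antitone, hence measurable, and bounded below by `U(1) - z`. Finiteness of `J` at the
minimizers therefore makes `W(y f₁)` and `W(y f₂)` integrable, and `W(y (f₁ + f₂)/2)` is
squeezed between integrable functions. Minimality gives
`E[W(y f₁)] + E[W(y f₂)] ≤ 2 E[W(y (f₁ + f₂)/2)]`, whereas pointwise the reverse inequality holds,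
strictly on `{f₁ ≠ f₂}`; so that set is null.
-/

open Filter Set Topology MeasureTheory
open scoped ENNReal

/-- The expectation of an `EReal`-valued random variable, defined as the (`ℝ≥0∞`-valued)
integral of its positive part minus that of its negative part, as an extended real. -/
noncomputable def erealExpectation {Ω : Type*} [MeasurableSpace Ω]
    (P : MeasureTheory.Measure Ω) (h : Ω → EReal) : EReal :=
  ((∫⁻ ω, (max (h ω) 0).abs ∂P : ℝ≥0∞) : EReal) -
    ((∫⁻ ω, (min (h ω) 0).abs ∂P : ℝ≥0∞) : EReal)

/-- The conjugate `V`, extended to `[0,∞)` by the value `V0 = V(0) := U(∞)` at `0`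
(arguments `z ≤ 0` are sent to `V0`; only `z ≥ 0` is ever used). -/
noncomputable def extendedV (V : ℝ → ℝ) (V0 : EReal) (z : ℝ) : EReal :=
  if 0 < z then (V z : EReal) else V0

namespace EReal

lemma abs_max_coe_zero (x : ℝ) : (max (x : EReal) 0).abs = ENNReal.ofReal x := by
  rcases le_total x 0 with h | h
  · rw [max_eq_right (by exact_mod_cast h), EReal.abs_zero, ENNReal.ofReal_of_nonpos h]
  · rw [max_eq_left (by exact_mod_cast h), abs_def, abs_of_nonneg h]

lemma abs_min_coe_zero (x : ℝ) : (min (x : EReal) 0).abs = ENNReal.ofReal (-x) := by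
  rcases le_total x 0 with h | h
  · rw [min_eq_left (by exact_mod_cast h), abs_def, abs_of_nonpos h]
  · rw [min_eq_right (by exact_mod_cast h), EReal.abs_zero,
      ENNReal.ofReal_of_nonpos (neg_nonpos.mpr h)]

lemma abs_min_zero_anti {x y : EReal} (h : x ≤ y) : (min y 0).abs ≤ (min x 0).abs := by
  induction x using EReal.rec <;> induction y using EReal.rec <;> try simp_all
  rw [abs_min_coe_zero, abs_min_coe_zero]
  exact ENNReal.ofReal_le_ofReal (neg_le_neg (by exact_mod_cast h))

lemma enorm_toReal_le (x : EReal) : ‖x.toReal‖ₑ ≤ (max x 0).abs + (min x 0).abs := by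
  induction x using EReal.rec with
  | bot => simp
  | top => simp
  | coe r =>
    rw [toReal_coe, abs_max_coe_zero, abs_min_coe_zero, ← ofReal_norm, Real.norm_eq_abs]
    rcases le_total r 0 with h | h
    · rw [abs_of_nonpos h]
      exact le_add_self
    · rw [abs_of_nonneg h]
      exact le_self_add

lemma le_coe_half_of_add_self_le {x : EReal} {s : ℝ} (h : x + x ≤ s) :
    x ≤ ((s / 2 : ℝ) : EReal) := by
  induction x using EReal.rec with
  | bot => exact bot_le
  | top => simp at h
  | coe r =>
    have : r + r ≤ s := by exact_mod_cast h
    exact_mod_cast (by linarith : r ≤ s / 2)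

lemma measurable_abs : Measurable EReal.abs := by
  apply measurable_of_measurable_real
  simp only [abs_def]
  exact ENNReal.measurable_ofReal.comp _root_.measurable_abs

end EReal

section erealExpectation

variable {Ω : Type*} [MeasurableSpace Ω] {P : Measure Ω} {h h' : Ω → EReal}

lemma erealExpectation_congr_ae (hh : h =ᵐ[P] h') :
    erealExpectation P h = erealExpectation P h' := by
  have hmax : ∫⁻ ω, (max (h ω) 0).abs ∂P = ∫⁻ ω, (max (h' ω) 0).abs ∂P :=
    lintegral_congr_ae (hh.mono fun ω hω => by simp only [hω])
  have hmin : ∫⁻ ω, (min (h ω) 0).abs ∂P = ∫⁻ ω, (min (h' ω) 0).abs ∂P :=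
    lintegral_congr_ae (hh.mono fun ω hω => by simp only [hω])
  rw [erealExpectation, erealExpectation, hmax, hmin]

lemma erealExpectation_coe {φ : Ω → ℝ} (hφ : Integrable φ P) :
    erealExpectation P (fun ω => (φ ω : EReal)) = ((∫ ω, φ ω ∂P : ℝ) : EReal) := by
  unfold erealExpectation
  simp only [EReal.abs_max_coe_zero, EReal.abs_min_coe_zero]
  rw [integral_eq_lintegral_pos_part_sub_lintegral_neg_part hφ, EReal.coe_sub,
    EReal.coe_ennreal_toReal hφ.lintegral_lt_top.ne,
    EReal.coe_ennreal_toReal (Integrable.lintegral_lt_top (f := fun ω => -φ ω) hφ.neg).ne]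

lemma erealExpectation_eq_integral {φ : Ω → ℝ} (hφ : Integrable φ P)
    (hh : h =ᵐ[P] fun ω => (φ ω : EReal)) :
    erealExpectation P h = ((∫ ω, φ ω ∂P : ℝ) : EReal) :=
  (erealExpectation_congr_ae hh).trans (erealExpectation_coe hφ)

lemma lintegral_abs_min_lt_top_of_coe_le {b : Ω → ℝ} (hb : Integrable b P)
    (hbh : ∀ᵐ ω ∂P, (b ω : EReal) ≤ h ω) : ∫⁻ ω, (min (h ω) 0).abs ∂P < ⊤ := by
  refine lt_of_le_of_lt (lintegral_mono_ae ?_) hb.neg.lintegral_lt_top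
  filter_upwards [hbh] with ω hω
  simpa only [EReal.abs_min_coe_zero, Pi.neg_apply] using EReal.abs_min_zero_anti hω

lemma lintegral_abs_max_lt_top (hneg : ∫⁻ ω, (min (h ω) 0).abs ∂P < ⊤)
    (hfin : erealExpectation P h ≠ ⊤) : ∫⁻ ω, (max (h ω) 0).abs ∂P < ⊤ := by
  refine lt_top_iff_ne_top.mpr fun hpos => hfin ?_
  rw [erealExpectation, hpos, EReal.coe_ennreal_top, ← EReal.coe_ennreal_toReal hneg.ne,
    EReal.top_sub_coe]

lemma exists_integrable_ae_eq_of_lintegral_lt_top (hm : AEMeasurable h P)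
    (hpos : ∫⁻ ω, (max (h ω) 0).abs ∂P < ⊤) (hneg : ∫⁻ ω, (min (h ω) 0).abs ∂P < ⊤) :
    ∃ φ : Ω → ℝ, Integrable φ P ∧ h =ᵐ[P] fun ω => (φ ω : EReal) := by
  have hmax : AEMeasurable (fun ω => (max (h ω) 0).abs) P :=
    EReal.measurable_abs.comp_aemeasurable (hm.max aemeasurable_const)
  have hmin : AEMeasurable (fun ω => (min (h ω) 0).abs) P :=
    EReal.measurable_abs.comp_aemeasurable (hm.min aemeasurable_const)
  refine ⟨fun ω => (h ω).toReal,
    ⟨(measurable_ereal_toReal.comp_aemeasurable hm).aestronglyMeasurable, ?_⟩, ?_⟩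
  · refine lt_of_le_of_lt (lintegral_mono fun ω => EReal.enorm_toReal_le (h ω)) ?_
    rw [lintegral_add_left' hmax]
    exact ENNReal.add_lt_top.mpr ⟨hpos, hneg⟩
  · filter_upwards [ae_lt_top' hmax hpos.ne, ae_lt_top' hmin hneg.ne] with ω hω₁ hω₂
    refine (EReal.coe_toReal (fun htop => ?_) (fun hbot => ?_)).symm
    · simp [htop] at hω₁
    · simp [hbot] at hω₂

lemma exists_integrable_ae_eq_of_erealExpectation_ne_top (hm : AEMeasurable h P)
    {b : Ω → ℝ} (hb : Integrable b P) (hbh : ∀ᵐ ω ∂P, (b ω : EReal) ≤ h ω)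
    (hfin : erealExpectation P h ≠ ⊤) :
    ∃ φ : Ω → ℝ, Integrable φ P ∧ h =ᵐ[P] fun ω => (φ ω : EReal) :=
  have hneg := lintegral_abs_min_lt_top_of_coe_le hb hbh
  exists_integrable_ae_eq_of_lintegral_lt_top hm (lintegral_abs_max_lt_top hneg hfin) hneg

lemma exists_integrable_ae_eq_of_coe_le_of_le_coe (hm : AEMeasurable h P)
    {b c : Ω → ℝ} (hb : Integrable b P) (hc : Integrable c P)
    (hbh : ∀ᵐ ω ∂P, (b ω : EReal) ≤ h ω) (hhc : ∀ᵐ ω ∂P, h ω ≤ c ω) :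
    ∃ φ : Ω → ℝ, Integrable φ P ∧ h =ᵐ[P] fun ω => (φ ω : EReal) := by
  have hfin : ∀ᵐ ω ∂P, h ω = ((h ω).toReal : EReal) := by
    filter_upwards [hbh, hhc] with ω hω₁ hω₂
    exact (EReal.coe_toReal (ne_top_of_le_ne_top (EReal.coe_ne_top _) hω₂)
      (ne_bot_of_le_ne_bot (EReal.coe_ne_bot _) hω₁)).symm
  refine ⟨fun ω => (h ω).toReal, integrable_of_le_of_le
    (measurable_ereal_toReal.comp_aemeasurable hm).aestronglyMeasurable ?_ ?_ hb hc, hfin⟩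
  · filter_upwards [hbh, hfin] with ω hω hω'
    rw [hω'] at hω
    exact_mod_cast hω
  · filter_upwards [hhc, hfin] with ω hω hω'
    rw [hω'] at hω
    exact_mod_cast hω

end erealExpectation

lemma ae_eq_of_ae_le_of_integral_le {Ω α : Type*} [MeasurableSpace Ω] {P : Measure Ω}
    {u v : Ω → ℝ} {f₁ f₂ : Ω → α} (hu : Integrable u P) (hv : Integrable v P)
    (huv : u ≤ᵐ[P] v) (hint : ∫ ω, v ω ∂P ≤ ∫ ω, u ω ∂P)
    (hlt : ∀ᵐ ω ∂P, f₁ ω ≠ f₂ ω → u ω < v ω) : f₁ =ᵐ[P] f₂ := by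
  have heq : u =ᵐ[P] v :=
    (integral_eq_iff_of_ae_le hu hv huv).mp (le_antisymm (integral_mono_ae hu hv huv) hint)
  filter_upwards [heq, hlt] with ω hω hω'
  by_contra hne
  exact (hω' hne).ne hω

def StrictMidpointConvexOn (s : Set ℝ) (F : ℝ → EReal) : Prop :=
  ∀ z₁ ∈ s, ∀ z₂ ∈ s, z₁ ≠ z₂ → F ((z₁ + z₂) / 2) + F ((z₁ + z₂) / 2) < F z₁ + F z₂

lemma StrictMidpointConvexOn.add_self_le {s : Set ℝ} {F : ℝ → EReal}
    (hF : StrictMidpointConvexOn s F) {z₁ z₂ : ℝ} (h₁ : z₁ ∈ s) (h₂ : z₂ ∈ s) :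
    F ((z₁ + z₂) / 2) + F ((z₁ + z₂) / 2) ≤ F z₁ + F z₂ := by
  rcases eq_or_ne z₁ z₂ with rfl | hne
  · rw [add_self_div_two]
  · exact (hF z₁ h₁ z₂ h₂ hne).le

section StrictMidpointConvexIntegrand

variable {Ω : Type*} [MeasurableSpace Ω] {P : Measure Ω}
  {F : ℝ → EReal} {a b : ℝ} {f₁ f₂ : Ω → ℝ} {φ₁ φ₂ ψ : Ω → ℝ}

lemma exists_integrable_ae_eq_comp [IsFiniteMeasure P] (hF : Measurable F)
    (hlb : ∀ z, 0 ≤ z → ((a - b * z : ℝ) : EReal) ≤ F z) {f : Ω → ℝ} (hf : Integrable f P)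
    (hf0 : ∀ ω, 0 ≤ f ω) (hfin : erealExpectation P (fun ω => F (f ω)) ≠ ⊤) :
    ∃ φ : Ω → ℝ, Integrable φ P ∧ (fun ω => F (f ω)) =ᵐ[P] fun ω => (φ ω : EReal) :=
  exists_integrable_ae_eq_of_erealExpectation_ne_top (hF.comp_aemeasurable hf.aemeasurable)
    ((integrable_const a).sub (hf.const_mul b)) (Eventually.of_forall fun ω => hlb _ (hf0 ω))
    hfin

lemma exists_integrable_ae_eq_comp_midpoint [IsFiniteMeasure P] (hF : Measurable F)
    (hlb : ∀ z, 0 ≤ z → ((a - b * z : ℝ) : EReal) ≤ F z) (hF_mid : StrictMidpointConvexOn (Ici 0) F)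
    (hf₁ : Integrable f₁ P) (hf₂ : Integrable f₂ P) (hf₁0 : ∀ ω, 0 ≤ f₁ ω) (hf₂0 : ∀ ω, 0 ≤ f₂ ω)
    (hφ₁ : Integrable φ₁ P) (hφ₂ : Integrable φ₂ P)
    (h₁ : (fun ω => F (f₁ ω)) =ᵐ[P] fun ω => (φ₁ ω : EReal))
    (h₂ : (fun ω => F (f₂ ω)) =ᵐ[P] fun ω => (φ₂ ω : EReal)) :
    ∃ ψ : Ω → ℝ, Integrable ψ P ∧
      (fun ω => F ((f₁ ω + f₂ ω) / 2)) =ᵐ[P] fun ω => (ψ ω : EReal) := by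
  have hf : Integrable (fun ω => (f₁ ω + f₂ ω) / 2) P := (hf₁.add hf₂).div_const 2
  refine exists_integrable_ae_eq_of_coe_le_of_le_coe (hF.comp_aemeasurable hf.aemeasurable)
    ((integrable_const a).sub (hf.const_mul b)) ((hφ₁.add hφ₂).div_const 2)
    (Eventually.of_forall fun ω => hlb _ (by linarith [hf₁0 ω, hf₂0 ω])) ?_
  filter_upwards [h₁, h₂] with ω hω₁ hω₂
  refine EReal.le_coe_half_of_add_self_le ?_
  rw [Pi.add_apply, EReal.coe_add, ← hω₁, ← hω₂]
  exact hF_mid.add_self_le (mem_Ici.mpr (hf₁0 ω)) (mem_Ici.mpr (hf₂0 ω))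

lemma ae_eq_of_integral_add_le_integral_comp_midpoint (hF_mid : StrictMidpointConvexOn (Ici 0) F)
    (hf₁0 : ∀ ω, 0 ≤ f₁ ω) (hf₂0 : ∀ ω, 0 ≤ f₂ ω)
    (hφ₁ : Integrable φ₁ P) (hφ₂ : Integrable φ₂ P) (hψ : Integrable ψ P)
    (h₁ : (fun ω => F (f₁ ω)) =ᵐ[P] fun ω => (φ₁ ω : EReal))
    (h₂ : (fun ω => F (f₂ ω)) =ᵐ[P] fun ω => (φ₂ ω : EReal))
    (hmid : (fun ω => F ((f₁ ω + f₂ ω) / 2)) =ᵐ[P] fun ω => (ψ ω : EReal))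
    (hint : ∫ ω, φ₁ ω ∂P + ∫ ω, φ₂ ω ∂P ≤ ∫ ω, ψ ω ∂P + ∫ ω, ψ ω ∂P) : f₁ =ᵐ[P] f₂ := by
  have hpt : ∀ᵐ ω ∂P, ((ψ ω + ψ ω : ℝ) : EReal) = F ((f₁ ω + f₂ ω) / 2) + F ((f₁ ω + f₂ ω) / 2)
      ∧ ((φ₁ ω + φ₂ ω : ℝ) : EReal) = F (f₁ ω) + F (f₂ ω) := by
    filter_upwards [h₁, h₂, hmid] with ω hω₁ hω₂ hω
    rw [EReal.coe_add, EReal.coe_add, hω, hω₁, hω₂]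
    exact ⟨rfl, rfl⟩
  refine ae_eq_of_ae_le_of_integral_le (hψ.add hψ) (hφ₁.add hφ₂) ?_ ?_ ?_
  · filter_upwards [hpt] with ω ⟨hψω, hφω⟩
    have := hF_mid.add_self_le (mem_Ici.mpr (hf₁0 ω)) (mem_Ici.mpr (hf₂0 ω))
    rw [← hψω, ← hφω] at this
    exact_mod_cast this
  · simpa only [Pi.add_apply, integral_add hφ₁ hφ₂, integral_add hψ hψ] using hint
  · filter_upwards [hpt] with ω ⟨hψω, hφω⟩ hne
    have := hF_mid _ (mem_Ici.mpr (hf₁0 ω)) _ (mem_Ici.mpr (hf₂0 ω)) hne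
    rw [← hψω, ← hφω] at this
    exact_mod_cast this

end StrictMidpointConvexIntegrand

lemma StrictConcaveOn.sub_mul_lt_of_hasDerivAt {S : Set ℝ} {U : ℝ → ℝ}
    (hU : StrictConcaveOn ℝ S U) {x t d : ℝ} (hx : x ∈ S) (ht : t ∈ S) (hd : HasDerivAt U d x)
    (hne : t ≠ x) : U t - t * d < U x - x * d := by
  rcases hne.lt_or_gt with hlt | hlt
  · have hs := hU.lt_slope_of_hasDerivAt ht hx hlt hd
    rw [slope_def_field, lt_div_iff₀ (sub_pos.mpr hlt)] at hs
    linarith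
  · have hs := hU.slope_lt_of_hasDerivAt hx ht hlt hd
    rw [slope_def_field, div_lt_iff₀ (sub_pos.mpr hlt)] at hs
    linarith

lemma coe_lt_of_strictMonoOn_of_tendsto {U : ℝ → ℝ} {V0 : EReal} (hU : StrictMonoOn U (Ioi 0))
    (hV0 : Tendsto (fun x => (U x : EReal)) atTop (𝓝 V0)) {x : ℝ} (hx : 0 < x) :
    (U x : EReal) < V0 := by
  have hle : (U (x + 1) : EReal) ≤ V0 := by
    refine ge_of_tendsto hV0 (eventually_atTop.mpr ⟨x + 1, fun t ht => ?_⟩)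
    exact_mod_cast hU.monotoneOn (mem_Ioi.mpr (by linarith)) (mem_Ioi.mpr (by linarith)) ht
  refine lt_of_lt_of_le ?_ hle
  exact_mod_cast hU (mem_Ioi.mpr hx) (mem_Ioi.mpr (by linarith)) (by linarith)

section ConjugateOfUtility

variable {U U' V I : ℝ → ℝ} {V0 : EReal}

lemma extendedV_of_pos {z : ℝ} (hz : 0 < z) : extendedV V V0 z = V z := if_pos hz

lemma extendedV_of_nonpos {z : ℝ} (hz : z ≤ 0) : extendedV V V0 z = V0 := if_neg hz.not_gt

lemma conjugate_eq_at_inverse_deriv (hU_conc : StrictConcaveOn ℝ (Ioi 0) U)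
    (hU_deriv : ∀ x ∈ Ioi (0 : ℝ), HasDerivAt U (U' x) x)
    (hV : ∀ y > 0, IsLUB {z : ℝ | ∃ x > 0, z = U x - x * y} (V y))
    (hI_pos : ∀ y > 0, 0 < I y) (hI_left : ∀ y > 0, U' (I y) = y) {w : ℝ} (hw : 0 < w) :
    V w = U (I w) - I w * w := by
  refine le_antisymm ((hV w hw).2 ?_) ((hV w hw).1 ⟨I w, hI_pos w hw, rfl⟩)
  rintro z ⟨t, ht, rfl⟩
  rcases eq_or_ne t (I w) with rfl | hne
  · exact le_rfl
  · have h := hU_conc.sub_mul_lt_of_hasDerivAt (hI_pos w hw) ht (hU_deriv _ (hI_pos w hw)) hne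
    rw [hI_left w hw] at h
    exact h.le

lemma coe_sub_mul_le_extendedV (hV : ∀ y > 0, IsLUB {z : ℝ | ∃ x > 0, z = U x - x * y} (V y))
    (hUlt : ∀ x > 0, (U x : EReal) < V0) {x z : ℝ} (hx : 0 < x) (hz : 0 ≤ z) :
    ((U x - x * z : ℝ) : EReal) ≤ extendedV V V0 z := by
  rcases hz.lt_or_eq with hz | rfl
  · rw [extendedV_of_pos hz]
    exact_mod_cast (hV z hz).1 ⟨x, hx, rfl⟩
  · rw [extendedV_of_nonpos le_rfl, mul_zero, sub_zero]
    exact (hUlt x hx).le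

lemma coe_sub_mul_lt_extendedV (hU_conc : StrictConcaveOn ℝ (Ioi 0) U)
    (hU_deriv : ∀ x ∈ Ioi (0 : ℝ), HasDerivAt U (U' x) x)
    (hV : ∀ y > 0, IsLUB {z : ℝ | ∃ x > 0, z = U x - x * y} (V y))
    (hI_pos : ∀ y > 0, 0 < I y) (hI_left : ∀ y > 0, U' (I y) = y)
    (hUlt : ∀ x > 0, (U x : EReal) < V0) {x z : ℝ} (hx : 0 < x) (hz : 0 ≤ z) (hne : U' x ≠ z) :
    ((U x - x * z : ℝ) : EReal) < extendedV V V0 z := by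
  rcases hz.lt_or_eq with hz | rfl
  · have hxz : x ≠ I z := fun h => hne (h ▸ hI_left z hz)
    have h := hU_conc.sub_mul_lt_of_hasDerivAt (hI_pos z hz) hx (hU_deriv _ (hI_pos z hz)) hxz
    rw [hI_left z hz, ← conjugate_eq_at_inverse_deriv hU_conc hU_deriv hV hI_pos hI_left hz] at h
    rw [extendedV_of_pos hz]
    exact_mod_cast h
  · rw [extendedV_of_nonpos le_rfl, mul_zero, sub_zero]
    exact hUlt x hx

lemma extendedV_antitone (hU_conc : StrictConcaveOn ℝ (Ioi 0) U)
    (hU_deriv : ∀ x ∈ Ioi (0 : ℝ), HasDerivAt U (U' x) x)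
    (hV : ∀ y > 0, IsLUB {z : ℝ | ∃ x > 0, z = U x - x * y} (V y))
    (hI_pos : ∀ y > 0, 0 < I y) (hI_left : ∀ y > 0, U' (I y) = y)
    (hUlt : ∀ x > 0, (U x : EReal) < V0) : Antitone (extendedV V V0) := by
  intro z₁ z₂ hz
  rcases le_or_gt z₂ 0 with hz₂ | hz₂
  · rw [extendedV_of_nonpos hz₂, extendedV_of_nonpos (hz.trans hz₂)]
  have hx := hI_pos z₂ hz₂
  have hz₁' : extendedV V V0 (max z₁ 0) = extendedV V V0 z₁ := by
    rcases le_total z₁ 0 with h | h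
    · rw [max_eq_right h, extendedV_of_nonpos le_rfl, extendedV_of_nonpos h]
    · rw [max_eq_left h]
  rw [extendedV_of_pos hz₂, conjugate_eq_at_inverse_deriv hU_conc hU_deriv hV hI_pos hI_left hz₂,
    ← hz₁']
  refine le_trans ?_ (coe_sub_mul_le_extendedV hV hUlt hx (le_max_right z₁ 0))
  have : I z₂ * max z₁ 0 ≤ I z₂ * z₂ := mul_le_mul_of_nonneg_left (max_le hz hz₂.le) hx.le
  exact_mod_cast (by linarith : U (I z₂) - I z₂ * z₂ ≤ U (I z₂) - I z₂ * max z₁ 0)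

lemma strictMidpointConvexOn_extendedV (hU_conc : StrictConcaveOn ℝ (Ioi 0) U)
    (hU_deriv : ∀ x ∈ Ioi (0 : ℝ), HasDerivAt U (U' x) x)
    (hV : ∀ y > 0, IsLUB {z : ℝ | ∃ x > 0, z = U x - x * y} (V y))
    (hI_pos : ∀ y > 0, 0 < I y) (hI_left : ∀ y > 0, U' (I y) = y)
    (hUlt : ∀ x > 0, (U x : EReal) < V0) : StrictMidpointConvexOn (Ici 0) (extendedV V V0) := by
  intro z₁ hz₁ z₂ hz₂ hne
  rw [mem_Ici] at hz₁ hz₂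
  set m := (z₁ + z₂) / 2 with hm_def
  have hm : 0 < m := by
    rcases hz₁.lt_or_eq with h | h
    · positivity
    · have : 0 < z₂ := hz₂.lt_of_ne (h.trans_ne hne)
      positivity
  have hx := hI_pos m hm
  have hsupp : ∀ z, 0 ≤ z → z ≠ m → ((U (I m) - I m * z : ℝ) : EReal) < extendedV V V0 z :=
    fun z hz hzm => coe_sub_mul_lt_extendedV hU_conc hU_deriv hV hI_pos hI_left hUlt hx hz
      (by rw [hI_left m hm]; exact hzm.symm)
  have hsum : (U (I m) - I m * m) + (U (I m) - I m * m)
      = (U (I m) - I m * z₁) + (U (I m) - I m * z₂) := by ring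
  rw [extendedV_of_pos hm, conjugate_eq_at_inverse_deriv hU_conc hU_deriv hV hI_pos hI_left hm,
    ← EReal.coe_add, hsum, EReal.coe_add]
  exact EReal.add_lt_add (hsupp z₁ hz₁ (fun h => hne (by linarith)))
    (hsupp z₂ hz₂ (fun h => hne (by linarith)))

end ConjugateOfUtility

theorem dual_minimizer_density_unique_general
    {Ω : Type*} [MeasurableSpace Ω] (P : Measure Ω) [IsProbabilityMeasure P]
    (U U' V I : ℝ → ℝ)
    (hU_incr : StrictMonoOn U (Set.Ioi 0))
    (hU_conc : StrictConcaveOn ℝ (Set.Ioi 0) U)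
    (hU_deriv : ∀ x ∈ Set.Ioi (0:ℝ), HasDerivAt U (U' x) x)
    (hV : ∀ y > 0, IsLUB {z : ℝ | ∃ x > 0, z = U x - x * y} (V y))
    (hI_pos : ∀ y > 0, 0 < I y)
    (hI_left : ∀ y > 0, U' (I y) = y)
    (V0 : EReal) (hV0 : Filter.Tendsto (fun x => (U x : EReal)) Filter.atTop (nhds V0))
    (y : ℝ) (hy : 0 < y)
    (D : Set ((Ω → ℝ) × ℝ))
    (hD_mem : ∀ p ∈ D, Integrable p.1 P ∧ ∀ ω, 0 ≤ p.1 ω)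
    (hD_conv : ∀ p ∈ D, ∀ q ∈ D, ∀ a b : ℝ, 0 ≤ a → 0 ≤ b → a + b = 1 →
      ((fun ω => a * p.1 ω + b * q.1 ω), a * p.2 + b * q.2) ∈ D)
    (J : (Ω → ℝ) × ℝ → EReal)
    (hJ_def : ∀ p, J p =
      erealExpectation P (fun ω => extendedV V V0 (y * p.1 ω)) + ((y * p.2 : ℝ) : EReal))
    (f₁ f₂ : Ω → ℝ) (c₁ c₂ : ℝ)
    (h₁ : (f₁, c₁) ∈ D) (h₂ : (f₂, c₂) ∈ D)
    (hmin₁ : ∀ p ∈ D, J (f₁, c₁) ≤ J p)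
    (hmin₂ : ∀ p ∈ D, J (f₂, c₂) ≤ J p)
    (hfin_top : J (f₁, c₁) ≠ ⊤) :
    f₁ =ᵐ[P] f₂ := by
  set W := extendedV V V0
  have hUlt : ∀ x > 0, (U x : EReal) < V0 :=
    fun x hx => coe_lt_of_strictMonoOn_of_tendsto hU_incr hV0 hx
  have hW_meas : Measurable W :=
    (extendedV_antitone hU_conc hU_deriv hV hI_pos hI_left hUlt).measurable
  have hW_lb : ∀ z, 0 ≤ z → ((U 1 - 1 * z : ℝ) : EReal) ≤ W z :=
    fun z hz => coe_sub_mul_le_extendedV hV hUlt one_pos hz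
  have hW_mid := strictMidpointConvexOn_extendedV hU_conc hU_deriv hV hI_pos hI_left hUlt
  have hyf : ∀ p ∈ D, Integrable (fun ω => y * p.1 ω) P ∧ ∀ ω, 0 ≤ y * p.1 ω := fun p hp =>
    ⟨(hD_mem p hp).1.const_mul y, fun ω => mul_nonneg hy.le ((hD_mem p hp).2 ω)⟩
  have hJ : ∀ p (φ : Ω → ℝ), Integrable φ P →
      (fun ω => W (y * p.1 ω)) =ᵐ[P] (fun ω => (φ ω : EReal)) →
      J p = ((∫ ω, φ ω ∂P + y * p.2 : ℝ) : EReal) := fun p φ hφ hpφ => by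
    rw [hJ_def, erealExpectation_eq_integral hφ hpφ, EReal.coe_add]
  have hrep : ∀ p ∈ D, J p ≠ ⊤ → ∃ φ : Ω → ℝ, Integrable φ P ∧
      (fun ω => W (y * p.1 ω)) =ᵐ[P] fun ω => (φ ω : EReal) := fun p hp hJp =>
    exists_integrable_ae_eq_comp hW_meas hW_lb (hyf p hp).1 (hyf p hp).2
      fun hE => hJp (by rw [hJ_def, hE, EReal.top_add_coe])
  obtain ⟨φ₁, hφ₁, hf₁φ⟩ := hrep _ h₁ hfin_top
  obtain ⟨φ₂, hφ₂, hf₂φ⟩ := hrep _ h₂ ((hmin₂ _ h₁).trans_lt hfin_top.lt_top).ne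
  have hg := hD_conv _ h₁ _ h₂ 2⁻¹ 2⁻¹ (by norm_num) (by norm_num) (by norm_num)
  obtain ⟨ψ, hψ, hgψ⟩ := exists_integrable_ae_eq_comp_midpoint hW_meas hW_lb hW_mid
    (hyf _ h₁).1 (hyf _ h₂).1 (hyf _ h₁).2 (hyf _ h₂).2 hφ₁ hφ₂ hf₁φ hf₂φ
  have hgψ' : (fun ω => W (y * (2⁻¹ * f₁ ω + 2⁻¹ * f₂ ω))) =ᵐ[P] fun ω => (ψ ω : EReal) := by
    convert hgψ using 4; ring
  have hint : ∫ ω, φ₁ ω ∂P + ∫ ω, φ₂ ω ∂P ≤ ∫ ω, ψ ω ∂P + ∫ ω, ψ ω ∂P := by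
    have hle₁ := hmin₁ _ hg
    have hle₂ := hmin₂ _ hg
    rw [hJ _ _ hφ₁ hf₁φ, hJ _ _ hψ hgψ', EReal.coe_le_coe_iff] at hle₁
    rw [hJ _ _ hφ₂ hf₂φ, hJ _ _ hψ hgψ', EReal.coe_le_coe_iff] at hle₂
    linarith
  filter_upwards [ae_eq_of_integral_add_le_integral_comp_midpoint hW_mid (hyf _ h₁).2
    (hyf _ h₂).2 hφ₁ hφ₂ hψ hf₁φ hf₂φ hgψ hint] with ω hω
  exact mul_left_cancel₀ hy.ne' hω

/-- Fix `y > 0` and a nonempty convex `D ⊆ L¹₊(P) × ℝ`, and set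
`J(f,c) := E[V(y·f)] + y·c` (with `V(0) := U(∞)` on `{f = 0}`; the expectation is well
defined in `(−∞,∞]` since `V(z) ≥ U(1) − z`). If `(f₁,c₁)` and `(f₂,c₂)` both attain the
infimum of `J` over `D` and this infimum is finite, then `f₁ = f₂` `P`-a.s. -/
theorem dual_minimizer_density_unique
    {Ω : Type*} [MeasurableSpace Ω] (P : Measure Ω) [IsProbabilityMeasure P]
    (U U' V I : ℝ → ℝ)
    (hU_incr : StrictMonoOn U (Set.Ioi 0))
    (hU_conc : StrictConcaveOn ℝ (Set.Ioi 0) U)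
    (hU_deriv : ∀ x ∈ Set.Ioi (0:ℝ), HasDerivAt U (U' x) x)
    (hU'_cont : ContinuousOn U' (Set.Ioi 0))
    (hInada_zero : Filter.Tendsto U' (nhdsWithin 0 (Set.Ioi 0)) Filter.atTop)
    (hInada_inf : Filter.Tendsto U' Filter.atTop (nhds 0))
    (hU_pos : ∃ x > 0, 0 < U x)
    (hV : ∀ y > 0, IsLUB {z : ℝ | ∃ x > 0, z = U x - x * y} (V y))
    (hI_pos : ∀ y > 0, 0 < I y)
    (hI_left : ∀ y > 0, U' (I y) = y)
    (hI_right : ∀ x > 0, I (U' x) = x)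
    (V0 : EReal) (hV0 : Filter.Tendsto (fun x => (U x : EReal)) Filter.atTop (nhds V0))
    (y : ℝ) (hy : 0 < y)
    (D : Set ((Ω → ℝ) × ℝ))
    (hD_ne : D.Nonempty)
    (hD_mem : ∀ p ∈ D, Integrable p.1 P ∧ ∀ ω, 0 ≤ p.1 ω)
    (hD_conv : ∀ p ∈ D, ∀ q ∈ D, ∀ a b : ℝ, 0 ≤ a → 0 ≤ b → a + b = 1 →
      ((fun ω => a * p.1 ω + b * q.1 ω), a * p.2 + b * q.2) ∈ D)
    (J : (Ω → ℝ) × ℝ → EReal)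
    (hJ_def : ∀ p, J p =
      erealExpectation P (fun ω => extendedV V V0 (y * p.1 ω)) + ((y * p.2 : ℝ) : EReal))
    (f₁ f₂ : Ω → ℝ) (c₁ c₂ : ℝ)
    (h₁ : (f₁, c₁) ∈ D) (h₂ : (f₂, c₂) ∈ D)
    (hmin₁ : ∀ p ∈ D, J (f₁, c₁) ≤ J p)
    (hmin₂ : ∀ p ∈ D, J (f₂, c₂) ≤ J p)
    (hfin_bot : J (f₁, c₁) ≠ ⊥) (hfin_top : J (f₁, c₁) ≠ ⊤) :
    f₁ =ᵐ[P] f₂ :=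
  dual_minimizer_density_unique_general P U U' V I hU_incr hU_conc hU_deriv hV hI_pos hI_left V0 hV0
    y hy D hD_mem hD_conv J hJ_def f₁ f₂ c₁ c₂ h₁ h₂ hmin₁ hmin₂ hfin_top
end

section
/- For every ε > 0 there exists a constant C > 0 such that −V(z) ≤ C + ε·z for all z > 0. Consequently, lim_{y→∞} (1/y) · sup { E[max(−V(y·g), 0)] : g : Ω → [0,∞) measurable with E[g] ≤ 1 } = 0, where V(y·g(ω)) is interpreted as V(0) = U(∞) on {g = 0}. -/
open Filter Set Topology MeasureTheory
open scoped ENNReal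

/-!
Since `V z ≥ U x - x z` for every `x > 0`, taking `x = ε` gives `-V z ≤ -U ε + ε z`. Evaluating
this at `z = y g` and integrating with `E[g] ≤ 1` bounds `E[max(-V(y g), 0)]` by `C + ε y`
uniformly in `g`, so the supremum divided by `y` is eventually at most `2ε`.
-/

lemma sub_mul_le_of_isLUB {U : ℝ → ℝ} {y v : ℝ}
    (hv : IsLUB {z : ℝ | ∃ x > 0, z = U x - x * y} v) {x : ℝ} (hx : 0 < x) :
    U x - x * y ≤ v :=
  hv.1 ⟨x, hx, rfl⟩

lemma exists_pos_neg_le_add_mul_of_isLUB {U V : ℝ → ℝ}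
    (hV : ∀ y > 0, IsLUB {z : ℝ | ∃ x > 0, z = U x - x * y} (V y)) {ε : ℝ} (hε : 0 < ε) :
    ∃ C : ℝ, 0 < C ∧ ∀ z : ℝ, 0 < z → -(V z) ≤ C + ε * z := by
  refine ⟨max 1 (-(U ε)), lt_max_of_lt_left one_pos, fun z hz => ?_⟩
  have := sub_mul_le_of_isLUB (hV z hz) hε
  linarith [le_max_right 1 (-(U ε))]

lemma tendsto_inv_mul_nhds_zero_of_sublinear {f : ℝ → ℝ} (hf₀ : ∀ᶠ y in atTop, 0 ≤ f y)
    (hf : ∀ ε > 0, ∃ C : ℝ, ∀ᶠ y in atTop, f y ≤ C + ε * y) :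
    Tendsto (fun y => 1 / y * f y) atTop (𝓝 0) := by
  rw [NormedAddGroup.tendsto_nhds_zero]
  intro ε hε
  obtain ⟨C, hC⟩ := hf (ε / 2) (half_pos hε)
  filter_upwards [hf₀, hC, eventually_gt_atTop 0, eventually_gt_atTop (2 * C / ε)]
    with y hy₀ hyC hy hyε
  have hCy : C < ε * y / 2 := by
    rw [div_lt_iff₀ hε] at hyε
    linarith
  rw [Real.norm_eq_abs, abs_of_nonneg (by positivity), one_div_mul_eq_div, div_lt_iff₀ hy]
  linarith

section Integration

variable {Ω : Type*} [MeasurableSpace Ω] {P : Measure Ω}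

lemma integrable_of_lintegral_ofReal_le_one {g : Ω → ℝ} (hg : Measurable g)
    (hg₀ : ∀ ω, 0 ≤ g ω) (hg₁ : ∫⁻ ω, ENNReal.ofReal (g ω) ∂P ≤ 1) : Integrable g P :=
  ⟨hg.aestronglyMeasurable, (hasFiniteIntegral_iff_ofReal (.of_forall hg₀)).2
    (hg₁.trans_lt ENNReal.one_lt_top)⟩

lemma integral_le_one_of_lintegral_ofReal_le_one {g : Ω → ℝ} (hg : Integrable g P)
    (hg₀ : ∀ ω, 0 ≤ g ω) (hg₁ : ∫⁻ ω, ENNReal.ofReal (g ω) ∂P ≤ 1) : ∫ ω, g ω ∂P ≤ 1 := by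
  rw [← ENNReal.ofReal_le_one, ofReal_integral_eq_lintegral_ofReal hg (.of_forall hg₀)]
  exact hg₁

lemma integral_le_add_mul_integral_of_le [IsProbabilityMeasure P] {f g : Ω → ℝ} {C a : ℝ}
    (hg : Integrable g P) (hf₀ : ∀ ω, 0 ≤ f ω) (hf : ∀ ω, f ω ≤ C + a * g ω) :
    ∫ ω, f ω ∂P ≤ C + a * ∫ ω, g ω ∂P := by
  have hrhs : Integrable (fun ω => C + a * g ω) P := (integrable_const C).add (hg.const_mul a)
  calc ∫ ω, f ω ∂P ≤ ∫ ω, (C + a * g ω) ∂P :=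
        integral_mono_of_nonneg (.of_forall hf₀) hrhs (.of_forall hf)
    _ = C + a * ∫ ω, g ω ∂P := by
        rw [integral_add (integrable_const C) (hg.const_mul a), integral_const,
          integral_const_mul, probReal_univ, one_smul]

end Integration

section NegPartOfConjugate

variable {Ω : Type*} [MeasurableSpace Ω] (P : Measure Ω) (V : ℝ → ℝ)

/-- On `{g = 0}` the integrand is `max (-V 0) 0 = 0`, as `V 0 = U ∞ > 0`. -/
def negPartConjugateValues (y : ℝ) : Set ℝ :=
  {r : ℝ | ∃ g : Ω → ℝ, Measurable g ∧ (∀ ω, 0 ≤ g ω) ∧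
    (∫⁻ ω, ENNReal.ofReal (g ω) ∂P) ≤ 1 ∧
    r = ∫ ω, (if g ω = 0 then 0 else max (-(V (y * g ω))) 0) ∂P}

lemma zero_mem_negPartConjugateValues (y : ℝ) : (0 : ℝ) ∈ negPartConjugateValues P V y :=
  ⟨fun _ => 0, measurable_const, fun _ => le_rfl, by simp, by simp⟩

variable {P V}

lemma le_of_mem_negPartConjugateValues [IsProbabilityMeasure P] {C ε y r : ℝ} (hC : 0 ≤ C)
    (hε : 0 ≤ ε) (hy : 0 < y) (hV : ∀ z : ℝ, 0 < z → -(V z) ≤ C + ε * z)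
    (hr : r ∈ negPartConjugateValues P V y) : r ≤ C + ε * y := by
  obtain ⟨g, hg, hg₀, hg₁, rfl⟩ := hr
  have hgi := integrable_of_lintegral_ofReal_le_one hg hg₀ hg₁
  have hpointwise : ∀ ω, (if g ω = 0 then 0 else max (-(V (y * g ω))) 0) ≤ C + ε * y * g ω := by
    intro ω
    split_ifs with h
    · simp [h, hC]
    · have hyg : 0 < y * g ω := mul_pos hy ((hg₀ ω).lt_of_ne' h)
      refine max_le ?_ (by have := hg₀ ω; positivity)
      linarith [hV _ hyg, mul_assoc ε y (g ω)]
  have hint := integral_le_add_mul_integral_of_le hgi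
    (fun ω => by split_ifs <;> simp) hpointwise
  have := integral_le_one_of_lintegral_ofReal_le_one hgi hg₀ hg₁
  nlinarith [mul_nonneg hε hy.le]

lemma sSup_negPartConjugateValues_le [IsProbabilityMeasure P] {C ε y : ℝ} (hC : 0 ≤ C)
    (hε : 0 ≤ ε) (hy : 0 < y) (hV : ∀ z : ℝ, 0 < z → -(V z) ≤ C + ε * z) :
    sSup (negPartConjugateValues P V y) ≤ C + ε * y :=
  csSup_le ⟨0, zero_mem_negPartConjugateValues P V y⟩ fun _ hr =>
    le_of_mem_negPartConjugateValues hC hε hy hV hr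

lemma sSup_negPartConjugateValues_nonneg [IsProbabilityMeasure P] {C ε y : ℝ} (hC : 0 ≤ C)
    (hε : 0 ≤ ε) (hy : 0 < y) (hV : ∀ z : ℝ, 0 < z → -(V z) ≤ C + ε * z) :
    0 ≤ sSup (negPartConjugateValues P V y) :=
  le_csSup ⟨C + ε * y, fun _ hr => le_of_mem_negPartConjugateValues hC hε hy hV hr⟩
    (zero_mem_negPartConjugateValues P V y)

end NegPartOfConjugate

theorem neg_V_sublinear_and_sup_vanishes_general
    {Ω : Type*} [MeasurableSpace Ω] (P : Measure Ω) [IsProbabilityMeasure P]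
    (U V : ℝ → ℝ)
    (hV : ∀ y > 0, IsLUB {z : ℝ | ∃ x > 0, z = U x - x * y} (V y)) :
    (∀ ε : ℝ, 0 < ε → ∃ C : ℝ, 0 < C ∧ ∀ z : ℝ, 0 < z → -(V z) ≤ C + ε * z) ∧
    Filter.Tendsto
      (fun y : ℝ => (1 / y) *
        sSup {r : ℝ | ∃ g : Ω → ℝ, Measurable g ∧ (∀ ω, 0 ≤ g ω) ∧
          (∫⁻ ω, ENNReal.ofReal (g ω) ∂P) ≤ 1 ∧
          r = ∫ ω, (if g ω = 0 then 0 else max (-(V (y * g ω))) 0) ∂P})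
      Filter.atTop (nhds 0) := by
  have hsublinear := fun ε (hε : 0 < ε) => exists_pos_neg_le_add_mul_of_isLUB hV hε
  refine ⟨hsublinear, tendsto_inv_mul_nhds_zero_of_sublinear (f := fun y =>
    sSup (negPartConjugateValues P V y)) ?_ fun ε hε => ?_⟩
  · obtain ⟨C, hC, hCV⟩ := hsublinear 1 one_pos
    filter_upwards [eventually_gt_atTop 0] with y hy
    exact sSup_negPartConjugateValues_nonneg hC.le zero_le_one hy hCV
  · obtain ⟨C, hC, hCV⟩ := hsublinear ε hε
    refine ⟨C, ?_⟩
    filter_upwards [eventually_gt_atTop 0] with y hy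
    exact sSup_negPartConjugateValues_le hC.le hε.le hy hCV

/-- For every `ε > 0` there is `C > 0` with `−V(z) ≤ C + ε·z` for all `z > 0`.
Consequently `(1/y)·sup { E[max(−V(y·g),0)] : g ≥ 0 measurable, E[g] ≤ 1 } → 0` as `y → ∞`
(on `{g = 0}` the integrand is `max(−V(0),0) = 0` since `V(0) = U(∞) > 0`). -/
theorem neg_V_sublinear_and_sup_vanishes
    {Ω : Type*} [MeasurableSpace Ω] (P : Measure Ω) [IsProbabilityMeasure P]
    (U U' V I : ℝ → ℝ)
    (hU_incr : StrictMonoOn U (Set.Ioi 0))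
    (hU_conc : StrictConcaveOn ℝ (Set.Ioi 0) U)
    (hU_deriv : ∀ x ∈ Set.Ioi (0:ℝ), HasDerivAt U (U' x) x)
    (hU'_cont : ContinuousOn U' (Set.Ioi 0))
    (hInada_zero : Filter.Tendsto U' (nhdsWithin 0 (Set.Ioi 0)) Filter.atTop)
    (hInada_inf : Filter.Tendsto U' Filter.atTop (nhds 0))
    (hU_pos : ∃ x > 0, 0 < U x)
    (hV : ∀ y > 0, IsLUB {z : ℝ | ∃ x > 0, z = U x - x * y} (V y))
    (hI_pos : ∀ y > 0, 0 < I y)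
    (hI_left : ∀ y > 0, U' (I y) = y)
    (hI_right : ∀ x > 0, I (U' x) = x) :
    (∀ ε : ℝ, 0 < ε → ∃ C : ℝ, 0 < C ∧ ∀ z : ℝ, 0 < z → -(V z) ≤ C + ε * z) ∧
    Filter.Tendsto
      (fun y : ℝ => (1 / y) *
        sSup {r : ℝ | ∃ g : Ω → ℝ, Measurable g ∧ (∀ ω, 0 ≤ g ω) ∧
          (∫⁻ ω, ENNReal.ofReal (g ω) ∂P) ≤ 1 ∧
          r = ∫ ω, (if g ω = 0 then 0 else max (-(V (y * g ω))) 0) ∂P})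
      Filter.atTop (nhds 0) :=
  neg_V_sublinear_and_sup_vanishes_general P U V hV
end
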